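/- arXiv:2404.18241 — 3 statements merged into one kernel-verified Lean document; each statement's English description precedes it below -/
import Mathlib

section
/- For every δ ∈ (0,1) and C₀ > 0 there exists a constant C = C(δ, C₀) > 0 with the following property. Let h ∈ (0,1), let α be a real number with √(1−δ²) ≤ α ≤ 1, and let w : ℝ → ℂ be a twice continuously differentiable function with w ∈ L²(ℝ), w′ ∈ L²(ℝ), ‖w‖_{L²(ℝ)} ≤ 1 and ‖w′‖_{L²(ℝ)} ≤ C₀, satisfying the semiclassical equation −h²·w″(y) + (α² − 1/cosh²(y))·w(y) = 2h²·tanh(y)·w′(y) + h²·w(y) for all y ∈ ℝ. Then ∫_{y ∈ ℝ, |tanh(y)| > 2δ} |w(y)|² dy ≤ C·h². -/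
open Real MeasureTheory

lemma tanh_strictMono : StrictMono Real.tanh := by
  intro x y hxy
  have hcx := Real.cosh_pos x
  have hcy := Real.cosh_pos y
  have hs : 0 < Real.sinh (y - x) := by
    rw [Real.sinh_pos_iff]; linarith
  rw [Real.sinh_sub] at hs
  rw [Real.tanh_eq_sinh_div_cosh, Real.tanh_eq_sinh_div_cosh, div_lt_div_iff₀ hcx hcy]
  nlinarith

lemma abs_tanh_lt_one (x : ℝ) : |Real.tanh x| < 1 := by
  have hcx := Real.cosh_pos x
  have h1 : Real.sinh x < Real.cosh x := Real.sinh_lt_cosh x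
  have h2 : Real.sinh (-x) < Real.cosh (-x) := Real.sinh_lt_cosh (-x)
  rw [Real.sinh_neg, Real.cosh_neg] at h2
  rw [abs_lt, Real.tanh_eq_sinh_div_cosh]
  constructor
  · rw [lt_div_iff₀ hcx]; linarith
  · rw [div_lt_iff₀ hcx]; linarith

lemma abs_tanh_eq (y : ℝ) : |Real.tanh y| = Real.tanh |y| := by
  rcases le_or_gt 0 y with hy | hy
  · rw [abs_of_nonneg hy, abs_of_nonneg]
    have := tanh_strictMono.monotone hy
    rwa [Real.tanh_zero] at this
  · rw [abs_of_neg hy, abs_of_neg, Real.tanh_neg]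
    have := tanh_strictMono hy
    rwa [Real.tanh_zero] at this

lemma exists_tanh_eq {t : ℝ} (ht0 : 0 ≤ t) (ht1 : t < 1) : ∃ b : ℝ, Real.tanh b = t := by
  have hc : Continuous Real.tanh := by
    have : Real.tanh = fun x => Real.sinh x / Real.cosh x := by
      funext x; exact Real.tanh_eq_sinh_div_cosh x
    rw [this]
    exact Real.continuous_sinh.div Real.continuous_cosh (fun x => (Real.cosh_pos x).ne')
  set x₀ : ℝ := -Real.log (1 - t) with hx₀
  have hx0 : Real.exp (-x₀) = 1 - t := by
    rw [hx₀, neg_neg, Real.exp_log]; linarith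
  have htx : t ≤ Real.tanh x₀ := by
    have hcx := Real.cosh_pos x₀
    have hc1 : 1 ≤ Real.cosh x₀ := Real.one_le_cosh x₀
    have hce : Real.cosh x₀ - Real.sinh x₀ = Real.exp (-x₀) := by
      rw [Real.cosh_eq, Real.sinh_eq]; ring
    rw [Real.tanh_eq_sinh_div_cosh, le_div_iff₀ hcx]
    rw [hx0] at hce
    nlinarith
  have hx₀nn : (0:ℝ) ≤ x₀ := by
    rw [hx₀, le_neg, neg_zero]
    exact Real.log_nonpos (by linarith) (by linarith)
  have him := intermediate_value_Icc hx₀nn hc.continuousOn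
  have hmem : t ∈ Set.Icc (Real.tanh 0) (Real.tanh x₀) := by
    rw [Real.tanh_zero]; exact ⟨ht0, htx⟩
  obtain ⟨b, _, hb⟩ := him hmem
  exact ⟨b, hb⟩

lemma one_sub_tanh_sq (x : ℝ) : 1 - Real.tanh x ^ 2 = 1 / Real.cosh x ^ 2 := by
  have hcx := (Real.cosh_pos x).ne'
  rw [Real.tanh_eq_sinh_div_cosh]
  have h := Real.cosh_sq_sub_sinh_sq x
  field_simp
  exact h

lemma hasDerivAt_tanh (x : ℝ) : HasDerivAt Real.tanh (1 / Real.cosh x ^ 2) x := by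
  have h : HasDerivAt (fun y => Real.sinh y / Real.cosh y)
      ((Real.cosh x * Real.cosh x - Real.sinh x * Real.sinh x) / Real.cosh x ^ 2) x :=
    (Real.hasDerivAt_sinh x).div (Real.hasDerivAt_cosh x) (Real.cosh_pos x).ne'
  have he : Real.tanh = fun y => Real.sinh y / Real.cosh y := by
    funext y; exact Real.tanh_eq_sinh_div_cosh y
  rw [he]
  convert h using 1
  have h2 := Real.cosh_sq_sub_sinh_sq x
  field_simp
  nlinarith

lemma hasDerivAt_re_conj_mul {f g : ℝ → ℂ} {f' g' : ℂ} {y : ℝ}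
    (hf : HasDerivAt f f' y) (hg : HasDerivAt g g' y) :
    HasDerivAt (fun t => ((starRingEnd ℂ) (f t) * g t).re)
      (((starRingEnd ℂ) f' * g y + (starRingEnd ℂ) (f y) * g').re) y := by
  have h1 : HasDerivAt (fun t => (starRingEnd ℂ) (f t)) ((starRingEnd ℂ) f') y := hf.star
  have h2 : HasDerivAt (fun t => (starRingEnd ℂ) (f t) * g t)
      ((starRingEnd ℂ) f' * g y + (starRingEnd ℂ) (f y) * g') y := h1.mul hg
  exact (Complex.reCLM.hasFDerivAt.comp_hasDerivAt y h2)

lemma sq_norm_integral_le {f : ℝ → ℂ} (hf : MemLp f 2 (volume : Measure ℝ)) {M : ℝ}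
    (hM : 0 ≤ M) (hle : eLpNorm f 2 (volume : Measure ℝ) ≤ ENNReal.ofReal M) :
    ∫ y : ℝ, ‖f y‖ ^ 2 ≤ M ^ 2 := by
  have hnn : 0 ≤ᵐ[volume] fun y => ‖f y‖ ^ 2 := Filter.Eventually.of_forall fun y => by positivity
  rw [MeasureTheory.integral_eq_lintegral_of_nonneg_ae hnn
    ((hf.aestronglyMeasurable.norm.pow 2).aemeasurable.aestronglyMeasurable)]
  have key : ∫⁻ y, ENNReal.ofReal (‖f y‖ ^ 2) = (eLpNorm f 2 volume) ^ 2 := by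
    rw [MeasureTheory.eLpNorm_eq_lintegral_rpow_enorm_toReal (by norm_num) (by norm_num)]
    rw [← ENNReal.rpow_natCast _ 2, ← ENNReal.rpow_mul]
    norm_num
  rw [key]
  calc ((eLpNorm f 2 volume) ^ 2).toReal ≤ ((ENNReal.ofReal M) ^ 2).toReal := by
        apply ENNReal.toReal_mono
        · exact ENNReal.pow_ne_top ENNReal.ofReal_ne_top
        · exact pow_le_pow_left' hle 2
    _ = M ^ 2 := by
        rw [← ENNReal.ofReal_pow hM, ENNReal.toReal_ofReal (by positivity)]

set_option maxHeartbeats 2000000 in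
/-- Semiclassical elliptic concentration estimate: a solution `w` of the
semiclassical equation `-h² w″ + (α² - 1/cosh² y) w = 2h² tanh(y) w′ + h² w` with
`‖w‖_{L²} ≤ 1` and `‖w′‖_{L²} ≤ C₀`, where `√(1-δ²) ≤ α ≤ 1`, has `L²` mass at most
`C h²` in the elliptic region `{|tanh y| > 2δ}`. -/
theorem semiclassical_elliptic_concentration
    (δ C₀ : ℝ) (hδ : δ ∈ Set.Ioo (0:ℝ) 1) (hC₀ : 0 < C₀) :
    ∃ C > (0:ℝ), ∀ (h α : ℝ), h ∈ Set.Ioo (0:ℝ) 1 →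
      Real.sqrt (1 - δ^2) ≤ α → α ≤ 1 →
      ∀ w : ℝ → ℂ, ContDiff ℝ 2 w →
      MemLp w 2 (volume : Measure ℝ) →
      MemLp (deriv w) 2 (volume : Measure ℝ) →
      eLpNorm w 2 (volume : Measure ℝ) ≤ 1 →
      eLpNorm (deriv w) 2 (volume : Measure ℝ) ≤ ENNReal.ofReal C₀ →
      (∀ y : ℝ,
        -(h:ℂ)^2 * deriv (deriv w) y + ((α^2 - 1/(Real.cosh y)^2 : ℝ) : ℂ) * w y
          = 2*(h:ℂ)^2 * ((Real.tanh y : ℝ) : ℂ) * deriv w y + (h:ℂ)^2 * w y) →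
      (∫ y in {y : ℝ | 2*δ < |Real.tanh y|}, ‖w y‖^2) ≤ C * h^2 := by
  obtain ⟨hδ0, hδ1⟩ := hδ
  by_cases hcase : 2*δ < 1
  case neg =>
    refine ⟨1, one_pos, fun h α hh _ _ w _ _ _ _ _ _ => ?_⟩
    have hempty : {y : ℝ | 2*δ < |Real.tanh y|} = ∅ := by
      ext y
      simp only [Set.mem_setOf_eq, Set.mem_empty_iff_false, iff_false, not_lt]
      exact le_trans (_root_.abs_tanh_lt_one y).le (by linarith)
    rw [hempty, MeasureTheory.setIntegral_empty]
    positivity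
  case pos =>
    obtain ⟨b₀, hb₀⟩ := exists_tanh_eq (by linarith : (0:ℝ) ≤ 3*δ/2) (by linarith)
    obtain ⟨b₁, hb₁⟩ := exists_tanh_eq (by linarith : (0:ℝ) ≤ 2*δ) (by linarith)
    have hb01 : b₀ < b₁ := tanh_strictMono.lt_iff_lt.mp (by rw [hb₀, hb₁]; linarith)
    have hb₀pos : 0 < b₀ := by
      have := tanh_strictMono.lt_iff_lt (a := 0) (b := b₀)
      rw [Real.tanh_zero, hb₀] at this
      exact this.mp (by linarith)
    set M₁ : ℝ := 2*(1+C₀^2)/(b₁ - b₀) with hM₁_def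
    have hM₁ : 0 < M₁ := by
      apply div_pos (by positivity) (by linarith)
    set K : ℝ := (4/(5*δ^2))*(3*M₁+1) with hK_def
    have hK : 0 < K := by positivity
    refine ⟨2*K, by positivity, ?_⟩
    intro h α hh hα1 hα2 w hw hwm hwm' hn1 hn2 heq
    obtain ⟨hh0, hh1⟩ := hh
    have hwc : Continuous w := hw.continuous
    have hw'c : Continuous (deriv w) := hw.continuous_deriv (by norm_num)
    have hdw : ContDiff ℝ 1 (deriv w) := by
      have h2 : ContDiff ℝ ((1:ℕ) + 1) w := by exact_mod_cast hw
      exact (contDiff_succ_iff_deriv.mp h2).2.2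
    have hw''c : Continuous (deriv (deriv w)) := hdw.continuous_deriv le_rfl
    have hw1d : ∀ y, HasDerivAt w (deriv w y) y := fun y =>
      ((hw.differentiable (by norm_num)) y).hasDerivAt
    have hw2d : ∀ y, HasDerivAt (deriv w) (deriv (deriv w) y) y := fun y =>
      ((hdw.differentiable (by norm_num)) y).hasDerivAt
    have hα0 : 0 ≤ α := le_trans (Real.sqrt_nonneg _) hα1
    have hα2' : 1 - δ^2 ≤ α^2 := by
      have hsq : Real.sqrt (1 - δ^2) ^ 2 = 1 - δ^2 :=
        Real.sq_sqrt (by nlinarith)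
      nlinarith [Real.sqrt_nonneg (1 - δ^2)]
    set u : ℝ → ℝ := fun y => ‖w y‖^2 with hu_def
    set v : ℝ → ℝ := fun y => ‖deriv w y‖^2 with hv_def
    set P : ℝ → ℝ := fun y => ((starRingEnd ℂ) (w y) * deriv w y).re with hP_def
    set Ψ : ℝ → ℝ := fun y => h^2 * P y + h^2 * (Real.tanh y * u y) with hΨ_def
    set Dfun : ℝ → ℝ := fun y =>
      h^2 * v y + (α^2 - 1/(Real.cosh y)^2) * u y - h^2 * u y
        + h^2 * ((1/(Real.cosh y)^2) * u y) with hD_def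
    -- the equation, multiplied by conj w, real part
    have hre : ∀ y : ℝ, h^2 * ((starRingEnd ℂ) (w y) * deriv (deriv w) y).re
        = (α^2 - 1/(Real.cosh y)^2) * u y - 2*h^2*Real.tanh y * P y - h^2 * u y := by
      intro y
      have hcw : (starRingEnd ℂ) (w y) * w y = ((u y : ℝ) : ℂ) := by
        rw [Complex.conj_mul']
        norm_cast
      have hc : (h:ℂ)^2 * ((starRingEnd ℂ) (w y) * deriv (deriv w) y)
          = ((α^2 - 1/(Real.cosh y)^2 : ℝ):ℂ) * ((starRingEnd ℂ) (w y) * w y)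
            - 2*(h:ℂ)^2 * ((Real.tanh y : ℝ):ℂ) * ((starRingEnd ℂ) (w y) * deriv w y)
            - (h:ℂ)^2 * ((starRingEnd ℂ) (w y) * w y) := by
        linear_combination (-(starRingEnd ℂ) (w y)) * (heq y)
      rw [hcw] at hc
      have hco : 2*(h:ℂ)^2 * ((Real.tanh y:ℝ):ℂ) = ((2*h^2*Real.tanh y : ℝ):ℂ) := by
        push_cast; ring
      have hh2 : (h:ℂ)^2 = ((h^2 : ℝ):ℂ) := by push_cast; ring
      rw [hco, hh2] at hc
      have h2 := congrArg Complex.re hc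
      simp only [Complex.re_ofReal_mul, Complex.sub_re, Complex.ofReal_re] at h2
      have hPy : ((starRingEnd ℂ) (w y) * deriv w y).re = P y := rfl
      rw [hPy] at h2
      linarith [h2]
    -- derivative of Ψ
    have hΨd : ∀ y : ℝ, HasDerivAt Ψ (Dfun y) y := by
      intro y
      have hP' : HasDerivAt P
          (((starRingEnd ℂ) (deriv w y) * deriv w y
            + (starRingEnd ℂ) (w y) * deriv (deriv w) y).re) y :=
        hasDerivAt_re_conj_mul (hw1d y) (hw2d y)
      have hu' : HasDerivAt u (2 * P y) y := by
        have h1 : HasDerivAt (fun t => ((starRingEnd ℂ) (w t) * w t).re)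
            (((starRingEnd ℂ) (deriv w y) * w y + (starRingEnd ℂ) (w y) * deriv w y).re) y :=
          hasDerivAt_re_conj_mul (hw1d y) (hw1d y)
        have he : u = fun t => ((starRingEnd ℂ) (w t) * w t).re := by
          funext t
          show ‖w t‖^2 = ((starRingEnd ℂ) (w t) * w t).re
          rw [Complex.conj_mul']
          norm_cast
        have hval : ((starRingEnd ℂ) (deriv w y) * w y + (starRingEnd ℂ) (w y) * deriv w y).re
            = 2 * P y := by
          have : (starRingEnd ℂ) (deriv w y) * w y
              = (starRingEnd ℂ) ((starRingEnd ℂ) (w y) * deriv w y) := by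
            simp [map_mul, mul_comm]
          rw [Complex.add_re, this, Complex.conj_re]
          rw [hP_def]; ring
        rw [he, ← hval]
        exact h1
      have hΨraw : HasDerivAt Ψ
          (h^2 * (((starRingEnd ℂ) (deriv w y) * deriv w y
              + (starRingEnd ℂ) (w y) * deriv (deriv w) y).re)
            + h^2 * ((1 / Real.cosh y ^ 2) * u y + Real.tanh y * (2 * P y))) y := by
        rw [hΨ_def]
        exact (hP'.const_mul (h^2)).add (((hasDerivAt_tanh y).mul hu').const_mul (h^2))
      have hvv : ((starRingEnd ℂ) (deriv w y) * deriv w y).re = v y := by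
        rw [Complex.conj_mul']
        norm_cast
      have hval2 : h^2 * (((starRingEnd ℂ) (deriv w y) * deriv w y
              + (starRingEnd ℂ) (w y) * deriv (deriv w) y).re)
            + h^2 * ((1 / Real.cosh y ^ 2) * u y + Real.tanh y * (2 * P y)) = Dfun y := by
        rw [Complex.add_re, hvv]
        have := hre y
        show _ = h ^ 2 * v y + (α ^ 2 - 1 / Real.cosh y ^ 2) * u y - h ^ 2 * u y
          + h ^ 2 * (1 / Real.cosh y ^ 2 * u y)
        linear_combination this
      rw [← hval2]
      exact hΨraw
    -- continuity of auxiliary functions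
    have hu_c : Continuous u := (hwc.norm).pow 2
    have hv_c : Continuous v := (hw'c.norm).pow 2
    have hP_c : Continuous P :=
      Complex.continuous_re.comp ((continuous_star.comp hwc).mul hw'c)
    have hu0 : ∀ y, 0 ≤ u y := fun y => by positivity
    have hv0 : ∀ y, 0 ≤ v y := fun y => by positivity
    have hsech_c : Continuous (fun y : ℝ => 1/(Real.cosh y)^2) :=
      continuous_const.div (Real.continuous_cosh.pow 2)
        (fun y => by positivity)
    have hD_c : Continuous Dfun := by
      rw [hD_def]
      refine (((continuous_const.mul hv_c).add
        (((continuous_const.sub hsech_c)).mul hu_c)).sub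
        (continuous_const.mul hu_c)).add
        (continuous_const.mul (hsech_c.mul hu_c))
    -- integrability and mass bounds
    have hu_int : Integrable u (volume : Measure ℝ) := by
      have h2 := hwm.integrable_norm_rpow two_ne_zero ENNReal.ofNat_ne_top
      simpa [ENNReal.toReal_ofNat, Real.rpow_natCast] using h2
    have hv_int : Integrable v (volume : Measure ℝ) := by
      have h2 := hwm'.integrable_norm_rpow two_ne_zero ENNReal.ofNat_ne_top
      simpa [ENNReal.toReal_ofNat, Real.rpow_natCast] using h2
    have hIu : ∫ y, u y ≤ 1 := by
      have := sq_norm_integral_le hwm zero_le_one (by simpa using hn1)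
      simpa using this
    have hIv : ∫ y, v y ≤ C₀^2 := sq_norm_integral_le hwm' hC₀.le hn2
    -- pointwise bound on Ψ
    have hΨabs : ∀ x : ℝ, |Ψ x| ≤ 3/2 * h^2 * (u x + v x) := by
      intro x
      have hPx : |P x| ≤ (u x + v x) / 2 := by
        have h1 : |P x| ≤ ‖(starRingEnd ℂ) (w x) * deriv w x‖ :=
          Complex.abs_re_le_norm _
        rw [norm_mul, RCLike.norm_conj] at h1
        have h2 : ‖w x‖ * ‖deriv w x‖ ≤ (u x + v x) / 2 := by
          have := sq_nonneg (‖w x‖ - ‖deriv w x‖)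
          show ‖w x‖ * ‖deriv w x‖ ≤ (‖w x‖^2 + ‖deriv w x‖^2) / 2
          nlinarith
        linarith
      have htx : |Real.tanh x| ≤ 1 := (_root_.abs_tanh_lt_one x).le
      have hux := hu0 x
      have hstep : |Ψ x| ≤ |h^2 * P x| + |h^2 * (Real.tanh x * u x)| := by
        rw [hΨ_def]; exact abs_add_le _ _
      have e1 : |h^2 * P x| = h^2 * |P x| := by
        rw [abs_mul, abs_of_nonneg (sq_nonneg h)]
      have e2 : |h^2 * (Real.tanh x * u x)| ≤ h^2 * u x := by
        rw [abs_mul, abs_mul, abs_of_nonneg (sq_nonneg h), abs_of_nonneg hux]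
        exact mul_le_mul_of_nonneg_left (mul_le_of_le_one_left hux htx) (sq_nonneg h)
      have e3 : h^2 * |P x| ≤ h^2 * ((u x + v x)/2) :=
        mul_le_mul_of_nonneg_left hPx (sq_nonneg h)
      have e4 : h^2 * u x ≤ h^2 * (u x + v x) :=
        mul_le_mul_of_nonneg_left (by linarith [hv0 x]) (sq_nonneg h)
      linarith [hstep, e1, e2, e3, e4]
    -- FTC
    have hFTC : ∀ s t : ℝ, (∫ y in s..t, Dfun y) = Ψ t - Ψ s := fun s t =>
      intervalIntegral.integral_eq_sub_of_hasDerivAt (fun y _ => hΨd y)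
        (hD_c.intervalIntegrable s t)
    -- ellipticity
    have hellip : ∀ y : ℝ, b₀ ≤ |y| → 5*δ^2/4 ≤ α^2 - 1/(Real.cosh y)^2 := by
      intro y hy
      have ht : 3*δ/2 ≤ |Real.tanh y| := by
        rw [abs_tanh_eq, ← hb₀]
        exact tanh_strictMono.monotone hy
      have ht2 : (3*δ/2)^2 ≤ Real.tanh y ^ 2 := by
        rw [← sq_abs (Real.tanh y)]
        exact pow_le_pow_left₀ (by linarith) ht 2
      have hsech : 1/(Real.cosh y)^2 = 1 - Real.tanh y ^ 2 := (one_sub_tanh_sq y).symm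
      rw [hsech]
      nlinarith
    -- pointwise inequality V u ≤ Dfun + h² u
    have hVu_le : ∀ y : ℝ, (α^2 - 1/(Real.cosh y)^2) * u y ≤ Dfun y + h^2 * u y := by
      intro y
      have h1 : 0 ≤ h^2 * v y := by positivity
      have h2 : 0 ≤ h^2 * ((1/(Real.cosh y)^2) * u y) := by
        have : (0:ℝ) < Real.cosh y := Real.cosh_pos y
        have := hu0 y
        positivity
      rw [hD_def]
      show (α^2 - 1/(Real.cosh y)^2) * u y ≤
        h^2 * v y + (α^2 - 1/(Real.cosh y)^2) * u y - h^2 * u y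
          + h^2 * ((1/(Real.cosh y)^2) * u y) + h^2 * u y
      linarith
    -- main segment estimate
    have hseg : ∀ s t : ℝ, s ≤ t → (∀ y ∈ Set.Icc s t, b₀ ≤ |y|) →
        5*δ^2/4 * ∫ y in s..t, u y ≤ (Ψ t - Ψ s) + h^2 := by
      intro s t hst hb
      have hint_u : IntervalIntegrable u volume s t := hu_c.intervalIntegrable s t
      have hVuc : Continuous (fun y => (α^2 - 1/(Real.cosh y)^2) * u y) :=
        (continuous_const.sub hsech_c).mul hu_c
      have hint_Vu : IntervalIntegrable (fun y => (α^2 - 1/(Real.cosh y)^2) * u y)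
          volume s t := hVuc.intervalIntegrable s t
      have step1 : 5*δ^2/4 * ∫ y in s..t, u y ≤ ∫ y in s..t, (α^2 - 1/(Real.cosh y)^2) * u y := by
        rw [← intervalIntegral.integral_const_mul]
        apply intervalIntegral.integral_mono_on hst
          ((continuous_const.mul hu_c).intervalIntegrable s t) hint_Vu
        intro y hy
        exact mul_le_mul_of_nonneg_right (hellip y (hb y hy)) (hu0 y)
      have step2 : (∫ y in s..t, (α^2 - 1/(Real.cosh y)^2) * u y)
          ≤ ∫ y in s..t, (Dfun y + h^2 * u y) := by
        apply intervalIntegral.integral_mono_on hst hint_Vu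
          ((hD_c.add (continuous_const.mul hu_c)).intervalIntegrable s t)
        intro y _
        exact hVu_le y
      have step3 : (∫ y in s..t, (Dfun y + h^2 * u y))
          = (Ψ t - Ψ s) + h^2 * ∫ y in s..t, u y := by
        rw [intervalIntegral.integral_add (f := Dfun) (g := fun y => h^2 * u y)
          (hD_c.intervalIntegrable s t)
          ((continuous_const.mul hu_c).intervalIntegrable s t), hFTC s t,
          intervalIntegral.integral_const_mul]
      have step4 : ∫ y in s..t, u y ≤ 1 := by
        rw [intervalIntegral.integral_of_le hst]
        calc (∫ y in Set.Ioc s t, u y) ≤ ∫ y, u y :=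
              setIntegral_le_integral hu_int (Filter.Eventually.of_forall hu0)
          _ ≤ 1 := hIu
      have hh2 : (0:ℝ) ≤ h^2 := sq_nonneg h
      have h5 : h^2 * (∫ y in s..t, u y) ≤ h^2 * 1 :=
        mul_le_mul_of_nonneg_left step4 hh2
      calc 5*δ^2/4 * ∫ y in s..t, u y
          ≤ ∫ y in s..t, (α^2 - 1/(Real.cosh y)^2) * u y := step1
        _ ≤ ∫ y in s..t, (Dfun y + h^2 * u y) := step2
        _ = (Ψ t - Ψ s) + h^2 * ∫ y in s..t, u y := step3
        _ ≤ (Ψ t - Ψ s) + h^2 * 1 := add_le_add (le_refl _) h5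
        _ = (Ψ t - Ψ s) + h^2 := by ring
    -- choice of the good point a
    set g : ℝ → ℝ := fun y => u y + v y + u (-y) + v (-y) with hg_def
    have hg_c : Continuous g := ((hu_c.add hv_c).add (hu_c.comp continuous_neg)).add
      (hv_c.comp continuous_neg)
    have hg0 : ∀ y, 0 ≤ g y := fun y => by
      have := hu0 y; have := hv0 y; have := hu0 (-y); have := hv0 (-y)
      rw [hg_def]; dsimp only; linarith
    obtain ⟨a, ha_mem, ha_min⟩ := (isCompact_Icc (a := b₀) (b := b₁)).exists_isMinOn
      ⟨b₀, Set.left_mem_Icc.mpr hb01.le⟩ hg_c.continuousOn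
    obtain ⟨hab₀, hab₁⟩ := ha_mem
    have hga : g a ≤ M₁ := by
      have h1 : (b₁ - b₀) * g a ≤ ∫ y in b₀..b₁, g y := by
        have hconst_ii : IntervalIntegrable (fun _ : ℝ => g a) volume b₀ b₁ :=
          continuous_const.intervalIntegrable b₀ b₁
        have := intervalIntegral.integral_mono_on hb01.le hconst_ii
          (hg_c.intervalIntegrable b₀ b₁) (fun y hy => ha_min hy)
        rw [intervalIntegral.integral_const, smul_eq_mul] at this
        linarith [this]
      have h2 : (∫ y in b₀..b₁, g y) ≤ 2*(1+C₀^2) := by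
        have huv_int : Integrable (fun y => u y + v y) (volume : Measure ℝ) :=
          hu_int.add hv_int
        have huv0 : ∀ y, (0:ℝ) ≤ u y + v y := fun y => by
          have := hu0 y; have := hv0 y; linarith
        have hIuv : ∫ y, (u y + v y) ≤ 1 + C₀^2 := by
          rw [integral_add hu_int hv_int]; linarith
        have hbd : ∀ s t : ℝ, s ≤ t → (∫ y in s..t, (u y + v y)) ≤ 1 + C₀^2 := by
          intro s t hst
          rw [intervalIntegral.integral_of_le hst]
          calc (∫ y in Set.Ioc s t, (u y + v y)) ≤ ∫ y, (u y + v y) :=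
                setIntegral_le_integral huv_int (Filter.Eventually.of_forall huv0)
            _ ≤ 1 + C₀^2 := hIuv
        have h1i : IntervalIntegrable (fun y => u y + v y) volume b₀ b₁ :=
          (hu_c.add hv_c).intervalIntegrable b₀ b₁
        have h2i : IntervalIntegrable (fun y => u (-y) + v (-y)) volume b₀ b₁ := by
          apply Continuous.intervalIntegrable
          exact (hu_c.comp continuous_neg).add (hv_c.comp continuous_neg)
        have hsplit : (∫ y in b₀..b₁, g y)
            = (∫ y in b₀..b₁, (u y + v y)) + ∫ y in b₀..b₁, (u (-y) + v (-y)) := by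
          have hcong : (∫ y in b₀..b₁, g y)
              = ∫ y in b₀..b₁, ((u y + v y) + (u (-y) + v (-y))) :=
            intervalIntegral.integral_congr (fun y _ => by simp only [hg_def]; ring)
          rw [hcong]
          exact intervalIntegral.integral_add h1i h2i
        have hneg : (∫ y in b₀..b₁, (u (-y) + v (-y))) = ∫ y in -b₁..-b₀, (u y + v y) :=
          intervalIntegral.integral_comp_neg (f := fun y => u y + v y)
        rw [hsplit, hneg]
        have := hbd b₀ b₁ hb01.le
        have h3 := hbd (-b₁) (-b₀) (by linarith)
        linarith
      have hpos : 0 < b₁ - b₀ := by linarith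
      rw [hM₁_def]
      rw [le_div_iff₀ hpos]
      nlinarith
    have hΨpt : ∀ x : ℝ, u x + v x + (u (-x) + v (-x)) ≤ M₁ →
        |Ψ x| ≤ 3/2 * h^2 * M₁ ∧ |Ψ (-x)| ≤ 3/2 * h^2 * M₁ := by
      intro x hx
      have h1 := hΨabs x
      have h2 := hΨabs (-x)
      have hu1 := hu0 x; have hv1 := hv0 x; have hu2 := hu0 (-x); have hv2 := hv0 (-x)
      have hh2 : (0:ℝ) ≤ h^2 := sq_nonneg h
      constructor
      · calc |Ψ x| ≤ 3/2 * h^2 * (u x + v x) := h1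
          _ ≤ 3/2 * h^2 * M₁ := by nlinarith
      · calc |Ψ (-x)| ≤ 3/2 * h^2 * (u (-x) + v (-x)) := h2
          _ ≤ 3/2 * h^2 * M₁ := by nlinarith
    have hΨa : |Ψ a| ≤ 3/2 * h^2 * M₁ ∧ |Ψ (-a)| ≤ 3/2 * h^2 * M₁ := by
      apply hΨpt
      have := hga
      rw [hg_def] at this
      dsimp only at this
      linarith
    -- existence of good large points
    have hT : ∀ T₀ : ℝ, ∃ T, T₀ ≤ T ∧ g T ≤ M₁ := by
      intro T₀
      by_contra hcon
      push_neg at hcon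
      have hgint : IntegrableOn g (Set.Ioi T₀) (volume : Measure ℝ) := by
        refine Integrable.integrableOn ?_
        exact ((hu_int.add hv_int).add hu_int.comp_neg).add hv_int.comp_neg
      have hconst : IntegrableOn (fun _ : ℝ => M₁) (Set.Ioi T₀) (volume : Measure ℝ) := by
        apply Integrable.mono' hgint aestronglyMeasurable_const
        rw [ae_restrict_iff' measurableSet_Ioi]
        refine Filter.Eventually.of_forall (fun y hy => ?_)
        rw [Real.norm_eq_abs, abs_of_pos hM₁]
        exact (hcon y hy.le).le
      have := (integrable_const_iff (c := M₁)).mp hconst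
      rcases this with hc | hc
      · exact hM₁.ne' hc
      · rw [isFiniteMeasure_restrict, Real.volume_Ioi] at hc
        exact hc rfl
    -- the key frequent bound
    have hfreq : ∀ T₀ : ℝ, ∃ T, T₀ ≤ T ∧ (∫ y in b₁..T, u y) ≤ K * h^2 ∧
        (∫ y in (-T)..(-b₁), u y) ≤ K * h^2 := by
      intro T₀
      obtain ⟨T, hT1, hT2⟩ := hT (max T₀ b₁)
      have hTb₁ : b₁ ≤ T := le_trans (le_max_right _ _) hT1
      have hTT₀ : T₀ ≤ T := le_trans (le_max_left _ _) hT1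
      have haT : a ≤ T := le_trans hab₁ hTb₁
      have hgT := hT2
      rw [hg_def] at hgT; dsimp only at hgT
      have hΨT : |Ψ T| ≤ 3/2 * h^2 * M₁ ∧ |Ψ (-T)| ≤ 3/2 * h^2 * M₁ := by
        apply hΨpt; linarith
      have hδ2pos : (0:ℝ) < 5*δ^2/4 := by positivity
      have hbd1 : 5*δ^2/4 * ∫ y in a..T, u y ≤ (3*M₁ + 1) * h^2 := by
        have hs := hseg a T haT (fun y hy => by
          rw [abs_of_nonneg (le_trans (by linarith) hy.1)]
          exact le_trans hab₀ hy.1)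
        have := hΨa.1
        have := hΨT.1
        have := abs_le.mp hΨa.1
        have := abs_le.mp hΨT.1
        nlinarith
      have hbd2 : 5*δ^2/4 * ∫ y in (-T)..(-a), u y ≤ (3*M₁ + 1) * h^2 := by
        have hs := hseg (-T) (-a) (by linarith) (fun y hy => by
          rw [abs_of_nonpos (le_trans hy.2 (by linarith))]
          have := hy.2
          linarith)
        have := abs_le.mp hΨa.2
        have := abs_le.mp hΨT.2
        nlinarith
      refine ⟨T, hTT₀, ?_, ?_⟩
      · have hsplit : (∫ y in a..T, u y) = (∫ y in a..b₁, u y) + ∫ y in b₁..T, u y :=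
          (intervalIntegral.integral_add_adjacent_intervals
            (hu_c.intervalIntegrable a b₁) (hu_c.intervalIntegrable b₁ T)).symm
        have hnn : 0 ≤ ∫ y in a..b₁, u y :=
          intervalIntegral.integral_nonneg hab₁ (fun y _ => hu0 y)
        have : 5*δ^2/4 * ∫ y in b₁..T, u y ≤ (3*M₁ + 1) * h^2 := by nlinarith
        rw [hK_def]
        have hδ' : (0:ℝ) < 5*δ^2 := by positivity
        rw [show (4/(5*δ^2))*(3*M₁+1) * h^2 = ((3*M₁+1) * h^2) / (5*δ^2/4) by
          field_simp]
        rw [le_div_iff₀ (by positivity)]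
        linarith [this]
      · have hsplit : (∫ y in (-T)..(-a), u y)
            = (∫ y in (-T)..(-b₁), u y) + ∫ y in (-b₁)..(-a), u y :=
          (intervalIntegral.integral_add_adjacent_intervals
            (hu_c.intervalIntegrable _ _) (hu_c.intervalIntegrable _ _)).symm
        have hnn : 0 ≤ ∫ y in (-b₁)..(-a), u y :=
          intervalIntegral.integral_nonneg (by linarith) (fun y _ => hu0 y)
        have : 5*δ^2/4 * ∫ y in (-T)..(-b₁), u y ≤ (3*M₁ + 1) * h^2 := by nlinarith
        rw [hK_def]
        rw [show (4/(5*δ^2))*(3*M₁+1) * h^2 = ((3*M₁+1) * h^2) / (5*δ^2/4) by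
          field_simp]
        rw [le_div_iff₀ (by positivity)]
        linarith [this]
    -- pass to the limit
    have hplus : (∫ y in Set.Ioi b₁, u y) ≤ K * h^2 := by
      have htend := MeasureTheory.intervalIntegral_tendsto_integral_Ioi b₁
        (hu_int.integrableOn) (Filter.tendsto_id (α := ℝ))
      by_contra hlt
      push_neg at hlt
      have hev := htend.eventually (eventually_gt_nhds hlt)
      rw [Filter.eventually_atTop] at hev
      obtain ⟨T₁, hT₁⟩ := hev
      obtain ⟨T, hTT₁, hb, _⟩ := hfreq T₁
      exact absurd hb (not_le.mpr (hT₁ T hTT₁))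
    have hminus : (∫ y in Set.Iic (-b₁), u y) ≤ K * h^2 := by
      have htend := MeasureTheory.intervalIntegral_tendsto_integral_Iic (-b₁)
        (hu_int.integrableOn) Filter.tendsto_neg_atTop_atBot
      by_contra hlt
      push_neg at hlt
      have hev := htend.eventually (eventually_gt_nhds hlt)
      rw [Filter.eventually_atTop] at hev
      obtain ⟨T₁, hT₁⟩ := hev
      obtain ⟨T, hTT₁, _, hb⟩ := hfreq T₁
      exact absurd hb (not_le.mpr (hT₁ T hTT₁))
    -- set identification and conclusion
    have hSeq : {y : ℝ | 2*δ < |Real.tanh y|} = Set.Iio (-b₁) ∪ Set.Ioi b₁ := by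
      ext y
      simp only [Set.mem_setOf_eq, Set.mem_union, Set.mem_Iio, Set.mem_Ioi]
      rw [abs_tanh_eq, ← hb₁]
      rw [tanh_strictMono.lt_iff_lt]
      rw [lt_abs]
      constructor
      · rintro (h1 | h1)
        · right; exact h1
        · left; linarith
      · rintro (h1 | h1)
        · right; linarith
        · left; exact h1
    rw [hSeq]
    have hdisj : Disjoint (Set.Iio (-b₁)) (Set.Ioi b₁) := by
      rw [Set.disjoint_left]
      intro x hx1 hx2
      simp only [Set.mem_Iio] at hx1
      simp only [Set.mem_Ioi] at hx2
      linarith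
    rw [MeasureTheory.setIntegral_union hdisj measurableSet_Ioi
      (hu_int.integrableOn) (hu_int.integrableOn)]
    have hIio : (∫ y in Set.Iio (-b₁), u y) ≤ ∫ y in Set.Iic (-b₁), u y := by
      apply setIntegral_mono_set (hu_int.integrableOn)
        (Filter.Eventually.of_forall hu0)
      exact HasSubset.Subset.eventuallyLE Set.Iio_subset_Iic_self
    have : 2*K*h^2 = K*h^2 + K*h^2 := by ring
    rw [show 2*K*h^2 = K*h^2 + K*h^2 by ring]
    exact add_le_add (le_trans hIio hminus) hplus
end

section
/- There exists a universal constant C > 0 with the following property. Let δ ∈ (0,1), let α be a real number with √(1−δ²) ≤ α ≤ 1, let h ∈ (0,1), and let χ : ℝ → ℝ be a smooth compactly supported function with 0 ≤ χ ≤ 1 whose support is contained in {y ∈ ℝ : |tanh(y)| ≥ (3/2)δ}. Define, for y, z ∈ ℝ, K(y,z) = (2πh)⁻¹ · χ(y) · ∫_ℝ exp(i(y−z)ξ/h) · (ξ² + α² − 1/cosh²(y))⁻¹ dξ. Then for all y, z ∈ ℝ, |K(y,z)| ≤ C·δ⁻⁴·min(h⁻¹, h/(y−z)²). -/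
open Real MeasureTheory

lemma intM (m : ℝ) (hm : 0 < m) : Integrable (fun ξ : ℝ => (ξ^2 + m)⁻¹) := by
  have hs : Real.sqrt m ≠ 0 := by positivity
  have h1 : Integrable (fun x : ℝ => (1 + x^2)⁻¹) := integrable_inv_one_add_sq
  have h2 := (h1.comp_div hs).const_mul m⁻¹
  apply h2.congr
  filter_upwards with ξ
  have : (ξ / Real.sqrt m)^2 = ξ^2 / m := by
    rw [div_pow, Real.sq_sqrt hm.le]
  rw [this]
  field_simp
  ring

lemma intMval (m : ℝ) (hm : 0 < m) : ∫ ξ : ℝ, (ξ^2 + m)⁻¹ = π / Real.sqrt m := by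
  have hs : (0:ℝ) < Real.sqrt m := Real.sqrt_pos.mpr hm
  have key : ∀ ξ : ℝ, (ξ^2 + m)⁻¹ = m⁻¹ * (1 + (ξ / Real.sqrt m)^2)⁻¹ := by
    intro ξ
    have : (ξ / Real.sqrt m)^2 = ξ^2 / m := by rw [div_pow, Real.sq_sqrt hm.le]
    rw [this]; field_simp; ring
  simp_rw [key]
  rw [MeasureTheory.integral_const_mul, MeasureTheory.Measure.integral_comp_div (fun x : ℝ => (1 + x^2)⁻¹) (Real.sqrt m),
    integral_univ_inv_one_add_sq, abs_of_pos hs, smul_eq_mul]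
  rw [eq_div_iff hs.ne']
  field_simp
  linear_combination Real.mul_self_sqrt hm.le

lemma w_ne (m : ℝ) (hm : 0 < m) (ξ : ℝ) : ((ξ^2 + m : ℝ) : ℂ) ≠ 0 := by
  rw [Complex.ofReal_ne_zero]; positivity

lemma norm_e (c ξ : ℝ) : ‖Complex.exp (Complex.I * c * ξ)‖ = 1 := by
  rw [Complex.norm_exp]
  simp [Complex.mul_re]

lemma norm_w_inv (m : ℝ) (hm : 0 < m) (ξ : ℝ) :
    ‖(((ξ^2 + m : ℝ) : ℂ))⁻¹‖ = (ξ^2 + m)⁻¹ := by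
  rw [norm_inv, Complex.norm_real, Real.norm_of_nonneg (by positivity)]

lemma int_of_bound {f : ℝ → ℂ} (hf : Continuous f) {m A : ℝ} (hm : 0 < m)
    (hA : ∀ ξ, ‖f ξ‖ ≤ A * (ξ^2+m)⁻¹) : Integrable f :=
  (((intM m hm).const_mul A).mono' hf.aestronglyMeasurable (ae_of_all _ hA))

lemma w_eq (m ξ : ℝ) : (ξ:ℂ)^2 + (m:ℂ) = ((ξ^2+m:ℝ):ℂ) := by push_cast; ring

lemma wne (m : ℝ) (hm : 0 < m) (ξ : ℝ) : ((ξ:ℂ)^2 + (m:ℂ)) ≠ 0 := by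
  rw [w_eq, Complex.ofReal_ne_zero]; positivity

lemma hw (m : ℝ) (ξ : ℝ) : HasDerivAt (fun t:ℝ => (t:ℂ)^2 + (m:ℂ)) (2*(ξ:ℂ)) ξ := by
  have h1 : HasDerivAt (fun t:ℝ => (t:ℂ)) 1 ξ := (hasDerivAt_id ξ).ofReal_comp
  have h := ((hasDerivAt_pow 2 ((ξ:ℂ))).comp ξ h1).add_const (m:ℂ)
  refine h.congr_deriv ?_
  push_cast; ring

lemma hg (m : ℝ) (hm : 0 < m) (ξ : ℝ) :
    HasDerivAt (fun t:ℝ => ((t:ℂ)^2+(m:ℂ))⁻¹) (-(2*(ξ:ℂ))/((ξ:ℂ)^2+(m:ℂ))^2) ξ := by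
  have hne := wne m hm ξ
  have h := (hasDerivAt_inv hne).comp ξ (hw m ξ)
  refine h.congr_deriv ?_
  field_simp

lemma hg1 (m : ℝ) (hm : 0 < m) (ξ : ℝ) :
    HasDerivAt (fun t:ℝ => -(2*(t:ℂ))/((t:ℂ)^2+(m:ℂ))^2)
      (-2/((ξ:ℂ)^2+(m:ℂ))^2 + 8*(ξ:ℂ)^2/((ξ:ℂ)^2+(m:ℂ))^3) ξ := by
  have hne := wne m hm ξ
  have h1 : HasDerivAt (fun t:ℝ => -(2*(t:ℂ))) (-2) ξ := by
    exact (((hasDerivAt_id ξ).ofReal_comp).const_mul (2:ℂ)).neg.congr_deriv (by simp)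
  have hsq : HasDerivAt (fun t:ℝ => ((t:ℂ)^2+(m:ℂ))^2) (2*((ξ:ℂ)^2+(m:ℂ))*(2*(ξ:ℂ))) ξ := by
    have h := (hasDerivAt_pow 2 ((ξ:ℂ)^2+(m:ℂ))).comp ξ (hw m ξ)
    refine h.congr_deriv ?_
    push_cast; ring
  have h2 : HasDerivAt (fun t:ℝ => (((t:ℂ)^2+(m:ℂ))^2)⁻¹)
      (-((2:ℂ) * ((ξ:ℂ)^2+(m:ℂ)) * (2*(ξ:ℂ)))/(((ξ:ℂ)^2+(m:ℂ))^2)^2) ξ := by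
    have h := (hasDerivAt_inv (pow_ne_zero 2 hne)).comp ξ hsq
    refine h.congr_deriv ?_
    field_simp
  have h3 := h1.mul h2
  have heq : (fun t:ℝ => -(2*(t:ℂ))/((t:ℂ)^2+(m:ℂ))^2)
      = fun t:ℝ => -(2*(t:ℂ)) * (((t:ℂ)^2+(m:ℂ))^2)⁻¹ := by
    funext t; rw [div_eq_mul_inv]
  rw [heq]
  refine h3.congr_deriv ?_
  field_simp
  ring

lemma hE (c : ℝ) (ξ : ℝ) : HasDerivAt (fun t:ℝ => Complex.exp (Complex.I*c*t))
    (Complex.I*c*Complex.exp (Complex.I*c*ξ)) ξ := by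
  have h1 : HasDerivAt (fun t:ℝ => Complex.I*(c:ℂ)*(t:ℂ)) (Complex.I*c) ξ := by
    simpa using ((hasDerivAt_id ξ).ofReal_comp).const_mul (Complex.I*(c:ℂ))
  simpa [mul_comm] using h1.cexp

lemma hE1 (c : ℝ) (hc : c ≠ 0) (ξ : ℝ) :
    HasDerivAt (fun t:ℝ => Complex.exp (Complex.I*c*t)/(Complex.I*c))
      (Complex.exp (Complex.I*c*ξ)) ξ := by
  have hIc : Complex.I * (c:ℂ) ≠ 0 := mul_ne_zero Complex.I_ne_zero (Complex.ofReal_ne_zero.mpr hc)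
  have := (hE c ξ).div_const (Complex.I*c)
  refine this.congr_deriv ?_
  field_simp
  exact div_self (Complex.ofReal_ne_zero.mpr hc)

lemma hE2 (c : ℝ) (hc : c ≠ 0) (ξ : ℝ) :
    HasDerivAt (fun t:ℝ => -Complex.exp (Complex.I*c*t)/(c:ℂ)^2)
      (Complex.exp (Complex.I*c*ξ)/(Complex.I*c)) ξ := by
  have hcc : (c:ℂ) ≠ 0 := Complex.ofReal_ne_zero.mpr hc
  have := ((hE c ξ).neg).div_const ((c:ℂ)^2)
  refine this.congr_deriv ?_
  rw [div_eq_div_iff (by simp [Complex.I_ne_zero, hcc]) (by simp [hcc])]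
  ring_nf
  rw [Complex.I_sq]
  ring

lemma cont_w (m : ℝ) : Continuous (fun ξ:ℝ => (ξ:ℂ)^2+(m:ℂ)) := by
  fun_prop

lemma cont_g (m : ℝ) (hm : 0 < m) : Continuous (fun ξ:ℝ => ((ξ:ℂ)^2+(m:ℂ))⁻¹) :=
  (cont_w m).inv₀ (wne m hm)

lemma cont_e (c : ℝ) : Continuous (fun ξ:ℝ => Complex.exp (Complex.I*c*ξ)) := by
  fun_prop

lemma norm_g (m : ℝ) (hm : 0 < m) (ξ : ℝ) : ‖((ξ:ℂ)^2+(m:ℂ))⁻¹‖ = (ξ^2+m)⁻¹ := by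
  rw [w_eq, norm_inv, Complex.norm_real, Real.norm_of_nonneg (by positivity)]

lemma norm_wpow (m : ℝ) (hm : 0 < m) (ξ : ℝ) (n : ℕ) :
    ‖((ξ:ℂ)^2+(m:ℂ))^n‖ = (ξ^2+m)^n := by
  rw [w_eq, norm_pow, Complex.norm_real, Real.norm_of_nonneg (by positivity)]

lemma norm_g1 (m : ℝ) (hm : 0 < m) (ξ : ℝ) :
    ‖-(2*(ξ:ℂ))/((ξ:ℂ)^2+(m:ℂ))^2‖ = 2*|ξ|/(ξ^2+m)^2 := by
  rw [norm_div, norm_neg, norm_wpow m hm, norm_mul]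
  simp [Complex.norm_real]

lemma norm_g2_le (m : ℝ) (hm : 0 < m) (ξ : ℝ) :
    ‖-2/((ξ:ℂ)^2+(m:ℂ))^2 + 8*(ξ:ℂ)^2/((ξ:ℂ)^2+(m:ℂ))^3‖
      ≤ (10/m) * (ξ^2+m)⁻¹ := by
  have hp : (0:ℝ) < ξ^2+m := by positivity
  have h1 : ‖-2/((ξ:ℂ)^2+(m:ℂ))^2‖ = 2/(ξ^2+m)^2 := by
    rw [norm_div, norm_neg, norm_wpow m hm]
    norm_num
  have h2 : ‖8*(ξ:ℂ)^2/((ξ:ℂ)^2+(m:ℂ))^3‖ = 8*ξ^2/(ξ^2+m)^3 := by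
    rw [norm_div, norm_wpow m hm, norm_mul, norm_pow]
    simp [Complex.norm_real, sq_abs]
  have t1 : 2/(ξ^2+m)^2 ≤ 2/(m*(ξ^2+m)) := by
    rw [div_le_div_iff₀ (by positivity) (by positivity)]
    nlinarith [sq_nonneg ξ]
  have e1 : m*ξ^2 ≤ (ξ^2+m)*(ξ^2+m) :=
    mul_le_mul (by nlinarith [sq_nonneg ξ]) (by nlinarith) (sq_nonneg ξ) hp.le
  have t2 : 8*ξ^2/(ξ^2+m)^3 ≤ 8/(m*(ξ^2+m)) := by
    rw [div_le_div_iff₀ (by positivity) (by positivity)]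
    nlinarith [mul_le_mul_of_nonneg_right e1 hp.le]
  have hr : (10/m) * (ξ^2+m)⁻¹ = 2/(m*(ξ^2+m)) + 8/(m*(ξ^2+m)) := by
    field_simp
    ring
  rw [hr]
  calc ‖-2/((ξ:ℂ)^2+(m:ℂ))^2 + 8*(ξ:ℂ)^2/((ξ:ℂ)^2+(m:ℂ))^3‖
      ≤ 2/(ξ^2+m)^2 + 8*ξ^2/(ξ^2+m)^3 := by
        rw [← h1, ← h2]; exact norm_add_le _ _
    _ ≤ 2/(m*(ξ^2+m)) + 8/(m*(ξ^2+m)) := add_le_add t1 t2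

lemma osc_trivial (m c : ℝ) (hm : 0 < m) :
    ‖∫ ξ : ℝ, Complex.exp (Complex.I * c * ξ) * ((ξ:ℂ)^2+(m:ℂ))⁻¹‖ ≤ π / Real.sqrt m := by
  have hb : ∀ ξ : ℝ, ‖Complex.exp (Complex.I * c * ξ) * ((ξ:ℂ)^2+(m:ℂ))⁻¹‖ = (ξ^2+m)⁻¹ := by
    intro ξ
    rw [norm_mul, norm_e, norm_g m hm, one_mul]
  calc ‖∫ ξ : ℝ, Complex.exp (Complex.I * c * ξ) * ((ξ:ℂ)^2+(m:ℂ))⁻¹‖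
      ≤ ∫ ξ : ℝ, (ξ^2+m)⁻¹ :=
        norm_integral_le_of_norm_le (intM m hm) (ae_of_all _ fun ξ => (hb ξ).le)
    _ = π / Real.sqrt m := intMval m hm

lemma osc_decay (m c : ℝ) (hm : 0 < m) (hc : c ≠ 0) :
    ‖∫ ξ : ℝ, Complex.exp (Complex.I * c * ξ) * ((ξ:ℂ)^2+(m:ℂ))⁻¹‖ ≤
      10 * π / (Real.sqrt m * m * c^2) := by
  have hs : (0:ℝ) < Real.sqrt m := Real.sqrt_pos.mpr hm
  set e : ℝ → ℂ := fun ξ => Complex.exp (Complex.I*c*ξ) with he_def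
  set g : ℝ → ℂ := fun ξ => ((ξ:ℂ)^2+(m:ℂ))⁻¹ with hg_def
  set g₁ : ℝ → ℂ := fun ξ => -(2*(ξ:ℂ))/((ξ:ℂ)^2+(m:ℂ))^2 with hg1_def
  set g₂ : ℝ → ℂ := fun ξ => -2/((ξ:ℂ)^2+(m:ℂ))^2 + 8*(ξ:ℂ)^2/((ξ:ℂ)^2+(m:ℂ))^3 with hg2_def
  set E₁ : ℝ → ℂ := fun ξ => Complex.exp (Complex.I*c*ξ)/(Complex.I*c) with hE1_def
  set E₂ : ℝ → ℂ := fun ξ => -Complex.exp (Complex.I*c*ξ)/(c:ℂ)^2 with hE2_def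
  -- norms of phases
  have nE1 : ∀ ξ : ℝ, ‖E₁ ξ‖ = |c|⁻¹ := by
    intro ξ
    rw [hE1_def, norm_div, norm_e, norm_mul, Complex.norm_I, Complex.norm_real, one_mul,
      Real.norm_eq_abs, one_div]
  have nE2 : ∀ ξ : ℝ, ‖E₂ ξ‖ = (c^2)⁻¹ := by
    intro ξ
    rw [hE2_def, norm_div, norm_neg, norm_e, norm_pow, Complex.norm_real, Real.norm_eq_abs,
      one_div, sq_abs]
  -- key AM-GM bound for g₁
  have ng1 : ∀ ξ : ℝ, ‖g₁ ξ‖ ≤ (Real.sqrt m)⁻¹ * (ξ^2+m)⁻¹ := by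
    intro ξ
    rw [hg1_def, norm_g1 m hm]
    have hp : (0:ℝ) < ξ^2+m := by positivity
    rw [div_le_iff₀ (by positivity)]
    have h2 : 2 * |ξ| * Real.sqrt m ≤ ξ^2+m := by
      nlinarith [sq_nonneg (|ξ| - Real.sqrt m), Real.sq_sqrt hm.le, sq_abs ξ]
    calc 2 * |ξ| ≤ (ξ^2+m)/Real.sqrt m := by rw [le_div_iff₀ hs]; linarith
      _ = (Real.sqrt m)⁻¹ * (ξ^2+m)⁻¹ * (ξ^2+m)^2 := by field_simp
  -- continuity
  have ce : Continuous e := cont_e c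
  have cg : Continuous g := cont_g m hm
  have cg1 : Continuous g₁ := by
    apply Continuous.div (by fun_prop) (by fun_prop)
    exact fun ξ => pow_ne_zero 2 (wne m hm ξ)
  have cg2 : Continuous g₂ := by
    apply Continuous.add
    · exact Continuous.div (by fun_prop) (by fun_prop) fun ξ => pow_ne_zero 2 (wne m hm ξ)
    · exact Continuous.div (by fun_prop) (by fun_prop) fun ξ => pow_ne_zero 3 (wne m hm ξ)
  have cE1 : Continuous E₁ := by fun_prop
  have cE2 : Continuous E₂ := by fun_prop
  -- integrabilities
  have int_ge : Integrable (fun ξ => g ξ * e ξ) := by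
    apply int_of_bound (cg.mul ce) hm (A := 1)
    intro ξ
    rw [Pi.mul_apply, norm_mul, norm_g m hm, norm_e c ξ, mul_one, one_mul]
  have int_g1E1 : Integrable (fun ξ => g₁ ξ * E₁ ξ) := by
    apply int_of_bound (cg1.mul cE1) hm (A := (Real.sqrt m)⁻¹ * |c|⁻¹)
    intro ξ
    rw [Pi.mul_apply, norm_mul, nE1 ξ]
    calc ‖g₁ ξ‖ * |c|⁻¹ ≤ ((Real.sqrt m)⁻¹ * (ξ^2+m)⁻¹) * |c|⁻¹ := by
          gcongr; exact ng1 ξ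
      _ = (Real.sqrt m)⁻¹ * |c|⁻¹ * (ξ^2+m)⁻¹ := by ring
  have int_gE1 : Integrable (fun ξ => g ξ * E₁ ξ) := by
    apply int_of_bound (cg.mul cE1) hm (A := |c|⁻¹)
    intro ξ
    rw [Pi.mul_apply, norm_mul, nE1 ξ, norm_g m hm]
    rw [mul_comm]
  have int_g1E2 : Integrable (fun ξ => g₁ ξ * E₂ ξ) := by
    apply int_of_bound (cg1.mul cE2) hm (A := (Real.sqrt m)⁻¹ * (c^2)⁻¹)
    intro ξ
    rw [Pi.mul_apply, norm_mul, nE2 ξ]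
    calc ‖g₁ ξ‖ * (c^2)⁻¹ ≤ ((Real.sqrt m)⁻¹ * (ξ^2+m)⁻¹) * (c^2)⁻¹ := by
          gcongr; exact ng1 ξ
      _ = (Real.sqrt m)⁻¹ * (c^2)⁻¹ * (ξ^2+m)⁻¹ := by ring
  have int_g2E2 : Integrable (fun ξ => g₂ ξ * E₂ ξ) := by
    apply int_of_bound (cg2.mul cE2) hm (A := 10/m * (c^2)⁻¹)
    intro ξ
    rw [Pi.mul_apply, norm_mul, nE2 ξ]
    calc ‖g₂ ξ‖ * (c^2)⁻¹ ≤ ((10/m) * (ξ^2+m)⁻¹) * (c^2)⁻¹ := by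
          gcongr; exact norm_g2_le m hm ξ
      _ = 10/m * (c^2)⁻¹ * (ξ^2+m)⁻¹ := by ring
  -- integration by parts twice
  have ibp1 : ∫ ξ : ℝ, g ξ * e ξ = - ∫ ξ : ℝ, g₁ ξ * E₁ ξ := by
    apply MeasureTheory.integral_mul_deriv_eq_deriv_mul_of_integrable
      (fun ξ _ => hg m hm ξ) (fun ξ _ => hE1 c hc ξ) int_ge int_g1E1 int_gE1
  have ibp2 : ∫ ξ : ℝ, g₁ ξ * E₁ ξ = - ∫ ξ : ℝ, g₂ ξ * E₂ ξ := by
    apply MeasureTheory.integral_mul_deriv_eq_deriv_mul_of_integrable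
      (fun ξ _ => hg1 m hm ξ) (fun ξ _ => hE2 c hc ξ) int_g1E1 int_g2E2 int_g1E2
  have main : ∫ ξ : ℝ, e ξ * g ξ = ∫ ξ : ℝ, g₂ ξ * E₂ ξ := by
    have : ∫ ξ : ℝ, e ξ * g ξ = ∫ ξ : ℝ, g ξ * e ξ := by
      congr 1; funext ξ; ring
    rw [this, ibp1, ibp2, neg_neg]
  rw [show (∫ ξ : ℝ, Complex.exp (Complex.I * c * ξ) * ((ξ:ℂ)^2+(m:ℂ))⁻¹)
      = ∫ ξ : ℝ, e ξ * g ξ from rfl, main]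
  calc ‖∫ ξ : ℝ, g₂ ξ * E₂ ξ‖ ≤ ∫ ξ : ℝ, 10/m * (c^2)⁻¹ * (ξ^2+m)⁻¹ := by
        apply norm_integral_le_of_norm_le (((intM m hm).const_mul _))
        filter_upwards with ξ
        rw [norm_mul, nE2 ξ]
        calc ‖g₂ ξ‖ * (c^2)⁻¹ ≤ ((10/m) * (ξ^2+m)⁻¹) * (c^2)⁻¹ := by
              gcongr; exact norm_g2_le m hm ξ
          _ = 10/m * (c^2)⁻¹ * (ξ^2+m)⁻¹ := by ring
    _ = 10/m * (c^2)⁻¹ * (π / Real.sqrt m) := by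
        rw [MeasureTheory.integral_const_mul, intMval m hm]
    _ = 10 * π / (Real.sqrt m * m * c^2) := by
        field_simp

/-- Kernel bound for the semiclassical pseudodifferential operator with
symbol `q(y,ξ) = χ(y)/(ξ² + α² - 1/cosh² y)`: the Schwartz kernel
`K(y,z) = (2πh)⁻¹ χ(y) ∫ exp(i(y-z)ξ/h) (ξ² + α² - 1/cosh² y)⁻¹ dξ` satisfies
`|K(y,z)| ≤ C δ⁻⁴ min(h⁻¹, h/(y-z)²)` (stated as the conjunction of the two bounds). -/
theorem semiclassical_parametrix_kernel_bound :
    ∃ C > (0:ℝ), ∀ (δ α h : ℝ), δ ∈ Set.Ioo (0:ℝ) 1 →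
      Real.sqrt (1 - δ^2) ≤ α → α ≤ 1 → h ∈ Set.Ioo (0:ℝ) 1 →
      ∀ χ : ℝ → ℝ, ContDiff ℝ (⊤ : ℕ∞) χ → HasCompactSupport χ →
      (∀ y, 0 ≤ χ y) → (∀ y, χ y ≤ 1) →
      (Function.support χ ⊆ {y : ℝ | (3/2)*δ ≤ |Real.tanh y|}) →
      ∀ K : ℝ → ℝ → ℂ,
      (∀ y z : ℝ, K y z = ((2*π*h)⁻¹ : ℝ) * ((χ y : ℝ) : ℂ) *
          ∫ ξ : ℝ, Complex.exp (Complex.I * ((y - z : ℝ) : ℂ) * (ξ : ℂ) / (h : ℂ)) *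
            (((ξ^2 + α^2 - 1/(Real.cosh y)^2 : ℝ) : ℂ))⁻¹) →
      ∀ y z : ℝ,
        ‖K y z‖ ≤ C * δ⁻¹^4 * h⁻¹ ∧
        (y ≠ z → ‖K y z‖ ≤ C * δ⁻¹^4 * (h / (y - z)^2)) := by
  refine ⟨10, by norm_num, ?_⟩
  intro δ α h hδ hα1 hα2 hh χ _ _ hχ0 hχ1 hχsupp K hK y z
  obtain ⟨hδ0, hδ1⟩ := hδ
  obtain ⟨hh0, hh1⟩ := hh
  have hδi : (1:ℝ) ≤ δ⁻¹ := by
    rw [le_inv_comm₀ one_pos hδ0]; simpa using hδ1.le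
  by_cases hcy : χ y = 0
  · have hK0 : K y z = 0 := by rw [hK, hcy]; simp
    rw [hK0, norm_zero]
    constructor
    · positivity
    · intro _
      apply mul_nonneg (by positivity) (div_nonneg hh0.le (sq_nonneg _))
  · set m : ℝ := α^2 - 1/(Real.cosh y)^2 with hm_def
    have hy : (3/2)*δ ≤ |Real.tanh y| := hχsupp (Function.mem_support.mpr hcy)
    have hcosh : 1/(Real.cosh y)^2 = 1 - Real.tanh y^2 := by
      rw [Real.tanh_eq_sinh_div_cosh]
      have hc := Real.cosh_pos y
      field_simp
      linarith [Real.cosh_sq_sub_sinh_sq y]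
    have hm : δ^2 ≤ m := by
      have h1 : 1 - δ^2 ≤ α^2 := by
        have hnn : (0:ℝ) ≤ 1 - δ^2 := by nlinarith
        calc 1 - δ^2 = Real.sqrt (1-δ^2)^2 := (Real.sq_sqrt hnn).symm
          _ ≤ α^2 := by gcongr
      have h2 : ((3/2)*δ)^2 ≤ Real.tanh y^2 := by
        rw [← sq_abs (Real.tanh y)]
        gcongr
      rw [hm_def, hcosh]
      nlinarith
    have hm0 : (0:ℝ) < m := lt_of_lt_of_le (by positivity) hm
    have hsm : δ ≤ Real.sqrt m := by
      calc δ = Real.sqrt (δ^2) := by rw [Real.sqrt_sq hδ0.le]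
        _ ≤ Real.sqrt m := Real.sqrt_le_sqrt hm
    have hs0 : (0:ℝ) < Real.sqrt m := lt_of_lt_of_le hδ0 hsm
    have hπh : (0:ℝ) < 2*π*h := by positivity
    have hKr : K y z = ((2*π*h)⁻¹ : ℝ) * ((χ y : ℝ) : ℂ) *
        ∫ ξ : ℝ, Complex.exp (Complex.I * (((y-z)/h : ℝ):ℂ) * ξ) * ((ξ:ℂ)^2 + (m:ℂ))⁻¹ := by
      rw [hK]
      congr 1
      apply integral_congr_ae
      filter_upwards with ξ
      congr 1
      · congr 1
        push_cast
        field_simp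
      · congr 1
        rw [hm_def]
        push_cast
        ring
    have hnorm : ‖K y z‖ = (2*π*h)⁻¹ * χ y *
        ‖∫ ξ : ℝ, Complex.exp (Complex.I * (((y-z)/h : ℝ):ℂ) * ξ) * ((ξ:ℂ)^2 + (m:ℂ))⁻¹‖ := by
      rw [hKr, norm_mul, norm_mul, Complex.norm_real, Complex.norm_real,
        Real.norm_of_nonneg (inv_nonneg.mpr hπh.le), Real.norm_of_nonneg (hχ0 y)]
    constructor
    · rw [hnorm]
      calc (2*π*h)⁻¹ * χ y *
            ‖∫ ξ : ℝ, Complex.exp (Complex.I * (((y-z)/h : ℝ):ℂ) * ξ) * ((ξ:ℂ)^2 + (m:ℂ))⁻¹‖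
          ≤ (2*π*h)⁻¹ * 1 * (π / Real.sqrt m) := by
            gcongr
            · exact hχ1 y
            · exact osc_trivial m ((y-z)/h) hm0
        _ = (Real.sqrt m)⁻¹ * (2*h)⁻¹ := by
            field_simp
        _ ≤ δ⁻¹ * h⁻¹ := by
            gcongr
            linarith
        _ ≤ 10 * δ⁻¹^4 * h⁻¹ := by
            have h14 : δ⁻¹ ≤ δ⁻¹^4 := by
              calc δ⁻¹ = δ⁻¹^1 := (pow_one _).symm
                _ ≤ δ⁻¹^4 := pow_le_pow_right₀ hδi (by norm_num)
            have hhi : (0:ℝ) ≤ h⁻¹ := inv_nonneg.mpr hh0.le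
            have ha := mul_le_mul_of_nonneg_right h14 hhi
            have hb : (0:ℝ) ≤ δ⁻¹^4 * h⁻¹ :=
              mul_nonneg (pow_nonneg (inv_nonneg.mpr hδ0.le) 4) hhi
            linarith
    · intro hyz
      have hc : (y-z)/h ≠ 0 := div_ne_zero (sub_ne_zero.mpr hyz) hh0.ne'
      have hyzne : y - z ≠ 0 := sub_ne_zero.mpr hyz
      have hyz2 : (0:ℝ) < (y-z)^2 := by positivity
      rw [hnorm]
      calc (2*π*h)⁻¹ * χ y *
            ‖∫ ξ : ℝ, Complex.exp (Complex.I * (((y-z)/h : ℝ):ℂ) * ξ) * ((ξ:ℂ)^2 + (m:ℂ))⁻¹‖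
          ≤ (2*π*h)⁻¹ * 1 * (10 * π / (Real.sqrt m * m * ((y-z)/h)^2)) := by
            gcongr
            · exact hχ1 y
            · exact osc_decay m ((y-z)/h) hm0 hc
        _ = 5 * ((Real.sqrt m * m)⁻¹) * (h/(y-z)^2) := by
            rw [div_pow]
            field_simp
            ring
        _ ≤ 5 * (δ^3)⁻¹ * (h/(y-z)^2) := by
            gcongr
            calc δ^3 = δ * δ^2 := by ring
              _ ≤ Real.sqrt m * m := mul_le_mul hsm hm (by positivity) hs0.le
        _ ≤ 10 * δ⁻¹^4 * (h/(y-z)^2) := by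
            have h34 : (δ^3)⁻¹ ≤ δ⁻¹^4 := by
              rw [← inv_pow]
              exact pow_le_pow_right₀ hδi (by norm_num)
            have hfrac : (0:ℝ) ≤ h/(y-z)^2 := div_nonneg hh0.le (sq_nonneg _)
            have ha := mul_le_mul_of_nonneg_right h34 hfrac
            have hb : (0:ℝ) ≤ δ⁻¹^4 * (h/(y-z)^2) :=
              mul_nonneg (pow_nonneg (inv_nonneg.mpr hδ0.le) 4) hfrac
            nlinarith
end

section
/- There exists a universal constant C > 0 with the following property. Let δ ∈ (0,1), let α be a real number with √(1−δ²) ≤ α ≤ 1, let h ∈ (0,1), and let χ : ℝ → ℝ be a smooth compactly supported function with 0 ≤ χ ≤ 1 whose support is contained in {y ∈ ℝ : |tanh(y)| ≥ (3/2)δ}. Define, for y, z ∈ ℝ, 𝒦(y,z) = (1/cosh²(z) − 1/cosh²(y)) · χ(y) · (2πh)⁻¹ · ∫_ℝ exp(i(y−z)ξ/h) · (ξ² + α² − 1/cosh²(y))⁻¹ dξ. Then for all y, z ∈ ℝ, |𝒦(y,z)| ≤ C·δ⁻⁶·min(1, h²/(y−z)²). -/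
open Real MeasureTheory

open Filter Complex

lemma integral_inv_sq_add (d : ℝ) (hd : 0 < d) :
    ∫ ξ : ℝ, (ξ^2 + d^2)⁻¹ = π / d := by
  have h := MeasureTheory.Measure.integral_comp_mul_left (fun x : ℝ => (x^2 + d^2)⁻¹) d
  have h2 : (fun x : ℝ => ((d * x)^2 + d^2)⁻¹) = fun x : ℝ => d⁻¹ * (d⁻¹ * (1 + x^2)⁻¹) := by
    funext x
    rw [show (d*x)^2 + d^2 = d*(d*(1+x^2)) by ring, mul_inv, mul_inv]
  rw [h2, MeasureTheory.integral_const_mul, MeasureTheory.integral_const_mul,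
    integral_univ_inv_one_add_sq, abs_of_pos (inv_pos.mpr hd), smul_eq_mul] at h
  have h3 := mul_left_cancel₀ (inv_ne_zero hd.ne') h
  rw [← h3, inv_mul_eq_div]

lemma integrable_inv_sq_add (d : ℝ) (hd : 0 < d) (hd1 : d ≤ 1) :
    Integrable fun ξ : ℝ => (ξ^2 + d^2)⁻¹ := by
  have hmeas : AEStronglyMeasurable (fun ξ : ℝ => (ξ^2 + d^2)⁻¹) volume := by
    apply Continuous.aestronglyMeasurable
    apply Continuous.inv₀ (by continuity)
    intro x; positivity
  refine (integrable_inv_one_add_sq.const_mul (d⁻¹*d⁻¹)).mono' hmeas ?_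
  filter_upwards with ξ
  rw [Real.norm_eq_abs, abs_of_pos (by positivity),
    show d⁻¹*d⁻¹*(1+ξ^2)⁻¹ = (d*(d*(1+ξ^2)))⁻¹ by rw [mul_inv, mul_inv, mul_assoc]]
  apply inv_anti₀ (by positivity)
  nlinarith [mul_nonneg (sq_nonneg ξ) (sub_nonneg.2 (mul_le_one₀ hd1 hd.le hd1))]

lemma ibp_step {c : ℂ} (hc : c ≠ 0) {F F' : ℝ → ℂ}
    (hd : ∀ x : ℝ, HasDerivAt F (F' x) x)
    (hi : Integrable fun ξ : ℝ => Complex.exp (c * ξ) * F ξ)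
    (hi' : Integrable fun ξ : ℝ => Complex.exp (c * ξ) * F' ξ) :
    ‖∫ ξ : ℝ, Complex.exp (c * ξ) * F ξ‖
      = ‖c‖⁻¹ * ‖∫ ξ : ℝ, Complex.exp (c * ξ) * F' ξ‖ := by
  have hEd : ∀ ξ : ℝ, HasDerivAt (fun t : ℝ => Complex.exp (c * t)) (Complex.exp (c * ξ) * c) ξ := by
    intro ξ
    have h1 : HasDerivAt (fun t : ℝ => c * (t : ℂ)) c ξ := by
      simpa using (Complex.ofRealCLM.hasDerivAt (x := ξ)).const_mul c
    simpa using h1.cexp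
  have hderiv : ∀ ξ : ℝ, HasDerivAt (fun t : ℝ => Complex.exp (c * t) * F t)
      (c * (Complex.exp (c * ξ) * F ξ) + Complex.exp (c * ξ) * F' ξ) ξ := by
    intro ξ
    have := (hEd ξ).mul (hd ξ)
    exact this.congr_deriv (by ring)
  have hint : Integrable fun ξ : ℝ => c * (Complex.exp (c * ξ) * F ξ) + Complex.exp (c * ξ) * F' ξ :=
    (hi.const_mul c).add hi'
  have hzero := integral_eq_zero_of_hasDerivAt_of_integrable hderiv hint hi
  rw [integral_add (hi.const_mul c) hi', MeasureTheory.integral_const_mul] at hzero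
  have key : (∫ ξ : ℝ, Complex.exp (c * ξ) * F ξ)
      = -c⁻¹ * ∫ ξ : ℝ, Complex.exp (c * ξ) * F' ξ := by
    field_simp
    linear_combination hzero
  rw [key, norm_mul, norm_neg, norm_inv]

lemma osc_key (b δ h a : ℝ) (hδ : 0 < δ) (hδ1 : δ ≤ 1) (hb : δ^2 ≤ b) (hh : 0 < h)
    (ha : a ≠ 0) :
    ‖∫ ξ : ℝ, Complex.exp (Complex.I * (a:ℂ) * (ξ:ℂ) / (h:ℂ)) * (((ξ^2 + b : ℝ) : ℂ))⁻¹‖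
        ≤ π * δ⁻¹^2 * (h/|a|) ∧
    ‖∫ ξ : ℝ, Complex.exp (Complex.I * (a:ℂ) * (ξ:ℂ) / (h:ℂ)) * (((ξ^2 + b : ℝ) : ℂ))⁻¹‖
        ≤ 12 * π * δ⁻¹^4 * (h/|a|)^3 := by
  have hb0 : 0 < b := lt_of_lt_of_le (by positivity) hb
  have hs : ∀ ξ : ℝ, 0 < ξ^2 + b := fun ξ => by positivity
  have hT : ∀ ξ : ℝ, 0 < ξ^2 + δ^2 := fun ξ => by positivity
  have hTA : ∀ ξ : ℝ, ξ^2 + δ^2 ≤ ξ^2 + b := fun ξ => by nlinarith [sq_nonneg ξ]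
  set c : ℂ := Complex.I * (a:ℂ) / (h:ℂ) with hcdef
  have hem : ∀ ξ : ℝ, Complex.I * (a:ℂ) * (ξ:ℂ) / (h:ℂ) = c * (ξ:ℂ) := by
    intro ξ; rw [hcdef]; ring
  have hcast : ∀ ξ : ℝ, ((ξ^2 + b : ℝ) : ℂ) = (ξ:ℂ)^2 + (b:ℂ) := by
    intro ξ; push_cast; ring
  simp_rw [hem, hcast]
  -- basic facts about c
  have hcn : ‖c‖ = |a| / h := by
    rw [hcdef]
    simp [norm_div, norm_mul, Complex.norm_I, Complex.norm_real,
      abs_of_pos hh]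
  have hc0 : c ≠ 0 := by
    intro hzero
    rw [hzero, norm_zero] at hcn
    have : |a| ≠ 0 := abs_ne_zero.mpr ha
    field_simp at hcn
    exact this (by simpa using hcn.symm)
  have hki : ‖c‖⁻¹ = h / |a| := by rw [hcn, inv_div]
  have hE1 : ∀ ξ : ℝ, ‖Complex.exp (c * (ξ:ℂ))‖ = 1 := by
    intro ξ
    have : c * (ξ:ℂ) = ((a * ξ / h : ℝ) : ℂ) * Complex.I := by rw [hcdef]; push_cast; ring
    rw [this, Complex.norm_exp_ofReal_mul_I]
  -- nonvanishing and norms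
  have hne : ∀ ξ : ℝ, (ξ:ℂ)^2 + (b:ℂ) ≠ 0 := by
    intro ξ
    rw [← hcast ξ]
    simp only [ne_eq, Complex.ofReal_eq_zero]
    exact (hs ξ).ne'
  have hnw : ∀ ξ : ℝ, ‖(ξ:ℂ)^2 + (b:ℂ)‖ = ξ^2 + b := by
    intro ξ
    rw [← hcast ξ, Complex.norm_real, Real.norm_eq_abs, abs_of_pos (hs ξ)]
  -- derivatives (computed over ℂ, then restricted to ℝ)
  have hd0 : ∀ ξ : ℝ, HasDerivAt (fun t : ℝ => ((t:ℂ)^2 + (b:ℂ))⁻¹)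
      (-(2*(ξ:ℂ)) / ((ξ:ℂ)^2 + (b:ℂ))^2) ξ := by
    intro ξ
    have hz : HasDerivAt (fun z : ℂ => (z^2 + (b:ℂ))⁻¹)
        (-(2*(ξ:ℂ)) / ((ξ:ℂ)^2 + (b:ℂ))^2) ((ξ:ℝ):ℂ) := by
      have h1 := ((hasDerivAt_pow 2 ((ξ:ℝ):ℂ)).add_const (b:ℂ)).inv (hne ξ)
      exact h1.congr_deriv (by norm_num)
    exact hz.comp_ofReal
  have hd1 : ∀ ξ : ℝ, HasDerivAt (fun t : ℝ => -(2*(t:ℂ)) / ((t:ℂ)^2 + (b:ℂ))^2)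
      ((6*(ξ:ℂ)^2 - 2*(b:ℂ)) / ((ξ:ℂ)^2 + (b:ℂ))^3) ξ := by
    intro ξ
    have hz : HasDerivAt (fun z : ℂ => -(2*z) / (z^2 + (b:ℂ))^2)
        ((6*(ξ:ℂ)^2 - 2*(b:ℂ)) / ((ξ:ℂ)^2 + (b:ℂ))^3) ((ξ:ℝ):ℂ) := by
      have hnum : HasDerivAt (fun z : ℂ => -(2*z)) (-2) ((ξ:ℝ):ℂ) := by
        exact (((hasDerivAt_id ((ξ:ℝ):ℂ)).const_mul (2:ℂ)).neg).congr_deriv (by simp)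
      have hden := ((hasDerivAt_pow 2 ((ξ:ℝ):ℂ)).add_const (b:ℂ)).pow 2
      have hd := hnum.div hden (pow_ne_zero 2 (hne ξ))
      have h0 := hne ξ
      exact hd.congr_deriv (by simp only [Pi.pow_apply]; field_simp; ring)
    exact hz.comp_ofReal
  have hd2 : ∀ ξ : ℝ, HasDerivAt
      (fun t : ℝ => (6*(t:ℂ)^2 - 2*(b:ℂ)) / ((t:ℂ)^2 + (b:ℂ))^3)
      ((-24*(ξ:ℂ)^3 + 24*(b:ℂ)*(ξ:ℂ)) / ((ξ:ℂ)^2 + (b:ℂ))^4) ξ := by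
    intro ξ
    have hz : HasDerivAt (fun z : ℂ => (6*z^2 - 2*(b:ℂ)) / (z^2 + (b:ℂ))^3)
        ((-24*(ξ:ℂ)^3 + 24*(b:ℂ)*(ξ:ℂ)) / ((ξ:ℂ)^2 + (b:ℂ))^4) ((ξ:ℝ):ℂ) := by
      have hnum : HasDerivAt (fun z : ℂ => 6*z^2 - 2*(b:ℂ)) (12*(ξ:ℂ)) ((ξ:ℝ):ℂ) := by
        have := ((hasDerivAt_pow 2 ((ξ:ℝ):ℂ)).const_mul (6:ℂ)).sub_const (2*(b:ℂ))
        exact this.congr_deriv (by norm_num; ring)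
      have hden := ((hasDerivAt_pow 2 ((ξ:ℝ):ℂ)).add_const (b:ℂ)).pow 3
      have hd := hnum.div hden (pow_ne_zero 3 (hne ξ))
      have h0 := hne ξ
      exact hd.congr_deriv (by simp only [Pi.pow_apply]; field_simp; ring)
    exact hz.comp_ofReal
  -- pointwise norm bounds
  have hn0 : ∀ ξ : ℝ, ‖Complex.exp (c * (ξ:ℂ)) * ((ξ:ℂ)^2 + (b:ℂ))⁻¹‖
      ≤ 1 * (ξ^2 + δ^2)⁻¹ := by
    intro ξ
    rw [norm_mul, hE1, one_mul, norm_inv, hnw, one_mul]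
    exact inv_anti₀ (hT ξ) (hTA ξ)
  have hn1 : ∀ ξ : ℝ, ‖Complex.exp (c * (ξ:ℂ)) * (-(2*(ξ:ℂ)) / ((ξ:ℂ)^2 + (b:ℂ))^2)‖
      ≤ δ⁻¹ * (ξ^2 + δ^2)⁻¹ := by
    intro ξ
    rw [norm_mul, hE1, one_mul, norm_div, norm_neg, norm_pow, hnw]
    have h2 : (2*(ξ:ℂ)) = ((2*ξ : ℝ):ℂ) := by push_cast; ring
    rw [h2, Complex.norm_real, Real.norm_eq_abs]
    have key : |2*ξ| / (ξ^2+b)^2 ≤ 1 / (δ*(ξ^2+δ^2)) := by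
      rw [div_le_div_iff₀ (by positivity) (by positivity)]
      have h1 : 2*δ* |ξ| ≤ ξ^2+δ^2 := by nlinarith [sq_nonneg (|ξ| - δ), _root_.sq_abs ξ]
      have h3 : |2*ξ| = 2* |ξ| := by rw [abs_mul]; norm_num
      rw [h3]
      calc 2* |ξ| *(δ*(ξ^2+δ^2)) = (2*δ* |ξ|)*(ξ^2+δ^2) := by ring
        _ ≤ (ξ^2+δ^2)*(ξ^2+b) := mul_le_mul h1 (hTA ξ) (hT ξ).le (hT ξ).le
        _ ≤ (ξ^2+b)*(ξ^2+b) := mul_le_mul_of_nonneg_right (hTA ξ) (hs ξ).le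
        _ = 1*(ξ^2+b)^2 := by ring
    calc |2*ξ| / (ξ^2+b)^2 ≤ 1 / (δ*(ξ^2+δ^2)) := key
      _ = δ⁻¹ * (ξ^2+δ^2)⁻¹ := by rw [one_div, mul_inv]
  have hn2 : ∀ ξ : ℝ,
      ‖Complex.exp (c * (ξ:ℂ)) * ((6*(ξ:ℂ)^2 - 2*(b:ℂ)) / ((ξ:ℂ)^2 + (b:ℂ))^3)‖
      ≤ (6*δ⁻¹^2) * (ξ^2 + δ^2)⁻¹ := by
    intro ξ
    rw [norm_mul, hE1, one_mul, norm_div, norm_pow, hnw]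
    have h2 : (6*(ξ:ℂ)^2 - 2*(b:ℂ)) = ((6*ξ^2 - 2*b : ℝ):ℂ) := by push_cast; ring
    rw [h2, Complex.norm_real, Real.norm_eq_abs]
    have habs : |6*ξ^2 - 2*b| ≤ 6*(ξ^2+b) := by
      rw [abs_le]; constructor <;> nlinarith [sq_nonneg ξ, hb0]
    have key : |6*ξ^2 - 2*b| / (ξ^2+b)^3 ≤ 6 / (δ^2*(ξ^2+δ^2)) := by
      rw [div_le_div_iff₀ (by positivity) (by positivity)]
      have e1 : δ^2*(ξ^2+δ^2) ≤ (ξ^2+b)^2 := by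
        nlinarith [sq_nonneg ξ, hT ξ, hTA ξ, hs ξ,
          mul_le_mul (show δ^2 ≤ ξ^2+δ^2 by nlinarith [sq_nonneg ξ]) (hTA ξ) (hT ξ).le (hT ξ).le]
      calc |6*ξ^2 - 2*b| * (δ^2*(ξ^2+δ^2)) ≤ (6*(ξ^2+b)) * ((ξ^2+b)^2) :=
            mul_le_mul habs e1 (by positivity) (by positivity)
        _ = 6 * (ξ^2+b)^3 := by ring
    calc |6*ξ^2 - 2*b| / (ξ^2+b)^3 ≤ 6 / (δ^2*(ξ^2+δ^2)) := key
      _ = (6*δ⁻¹^2) * (ξ^2+δ^2)⁻¹ := by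
          rw [inv_pow]
          field_simp
  have hn3 : ∀ ξ : ℝ,
      ‖Complex.exp (c * (ξ:ℂ)) * ((-24*(ξ:ℂ)^3 + 24*(b:ℂ)*(ξ:ℂ)) / ((ξ:ℂ)^2 + (b:ℂ))^4)‖
      ≤ (12*δ⁻¹^3) * (ξ^2 + δ^2)⁻¹ := by
    intro ξ
    rw [norm_mul, hE1, one_mul, norm_div, norm_pow, hnw]
    have h2 : (-24*(ξ:ℂ)^3 + 24*(b:ℂ)*(ξ:ℂ)) = ((-24*ξ^3 + 24*b*ξ : ℝ):ℂ) := by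
      push_cast; ring
    rw [h2, Complex.norm_real, Real.norm_eq_abs]
    have habs : |(-24*ξ^3 + 24*b*ξ)| ≤ 24 * |ξ| * (ξ^2+b) := by
      have hrw : (-24*ξ^3 + 24*b*ξ) = (24*ξ)*(b - ξ^2) := by ring
      rw [hrw, abs_mul]
      have h24 : |24*ξ| = 24* |ξ| := by rw [abs_mul]; norm_num
      rw [h24]
      have hbd : |b - ξ^2| ≤ ξ^2 + b := by
        rw [abs_le]; constructor <;> nlinarith [sq_nonneg ξ, hb0]
      exact mul_le_mul_of_nonneg_left hbd (by positivity)
    have key : |(-24*ξ^3 + 24*b*ξ)| / (ξ^2+b)^4 ≤ 12 / (δ^3*(ξ^2+δ^2)) := by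
      rw [div_le_div_iff₀ (by positivity) (by positivity)]
      have h1 : 2*δ* |ξ| ≤ ξ^2+δ^2 := by nlinarith [sq_nonneg (|ξ| - δ), _root_.sq_abs ξ]
      have e1 : δ^2*(ξ^2+δ^2) ≤ (ξ^2+b)^2 := by
        nlinarith [sq_nonneg ξ, hT ξ, hTA ξ, hs ξ,
          mul_le_mul (show δ^2 ≤ ξ^2+δ^2 by nlinarith [sq_nonneg ξ]) (hTA ξ) (hT ξ).le (hT ξ).le]
      calc |(-24*ξ^3 + 24*b*ξ)| * (δ^3*(ξ^2+δ^2))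
          ≤ (24 * |ξ| * (ξ^2+b)) * (δ^3*(ξ^2+δ^2)) :=
            mul_le_mul_of_nonneg_right habs (by positivity)
        _ = 12*(ξ^2+b) * ((2*δ* |ξ|) * (δ^2*(ξ^2+δ^2))) := by ring
        _ ≤ 12*(ξ^2+b) * ((ξ^2+δ^2) * (ξ^2+b)^2) := by
            apply mul_le_mul_of_nonneg_left
              (mul_le_mul h1 e1 (by positivity) (hT ξ).le) (by positivity)
        _ ≤ 12*(ξ^2+b) * ((ξ^2+b) * (ξ^2+b)^2) := by
            apply mul_le_mul_of_nonneg_left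
              (mul_le_mul_of_nonneg_right (hTA ξ) (by positivity)) (by positivity)
        _ = 12 * (ξ^2+b)^4 := by ring
    calc |(-24*ξ^3 + 24*b*ξ)| / (ξ^2+b)^4 ≤ 12 / (δ^3*(ξ^2+δ^2)) := key
      _ = (12*δ⁻¹^3) * (ξ^2+δ^2)⁻¹ := by
          rw [inv_pow]
          field_simp
  -- integrability
  have hIT' := integrable_inv_sq_add δ hδ hδ1
  have hcont_exp : Continuous fun ξ : ℝ => Complex.exp (c * (ξ:ℂ)) :=
    Complex.continuous_exp.comp (continuous_const.mul Complex.continuous_ofReal)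
  have hcont_or : Continuous fun ξ : ℝ => (ξ:ℂ) := Complex.continuous_ofReal
  have hcont_w : Continuous fun ξ : ℝ => (ξ:ℂ)^2 + (b:ℂ) :=
    (hcont_or.pow 2).add continuous_const
  have hi0 : Integrable fun ξ : ℝ => Complex.exp (c * (ξ:ℂ)) * ((ξ:ℂ)^2 + (b:ℂ))⁻¹ := by
    refine ((hIT'.const_mul 1).mono' ?_ (ae_of_all _ hn0))
    exact (hcont_exp.mul (hcont_w.inv₀ hne)).aestronglyMeasurable
  have hi1 : Integrable fun ξ : ℝ =>
      Complex.exp (c * (ξ:ℂ)) * (-(2*(ξ:ℂ)) / ((ξ:ℂ)^2 + (b:ℂ))^2) := by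
    refine ((hIT'.const_mul δ⁻¹).mono' ?_ (ae_of_all _ hn1))
    exact (hcont_exp.mul (((continuous_const.mul hcont_or).neg).div
      (hcont_w.pow 2) (fun ξ => pow_ne_zero 2 (hne ξ)))).aestronglyMeasurable
  have hi2 : Integrable fun ξ : ℝ =>
      Complex.exp (c * (ξ:ℂ)) * ((6*(ξ:ℂ)^2 - 2*(b:ℂ)) / ((ξ:ℂ)^2 + (b:ℂ))^3) := by
    refine ((hIT'.const_mul (6*δ⁻¹^2)).mono' ?_ (ae_of_all _ hn2))
    exact (hcont_exp.mul (((continuous_const.mul (hcont_or.pow 2)).sub continuous_const).div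
      (hcont_w.pow 3) (fun ξ => pow_ne_zero 3 (hne ξ)))).aestronglyMeasurable
  have hi3 : Integrable fun ξ : ℝ =>
      Complex.exp (c * (ξ:ℂ)) * ((-24*(ξ:ℂ)^3 + 24*(b:ℂ)*(ξ:ℂ)) / ((ξ:ℂ)^2 + (b:ℂ))^4) := by
    refine ((hIT'.const_mul (12*δ⁻¹^3)).mono' ?_ (ae_of_all _ hn3))
    exact (hcont_exp.mul
      (((continuous_const.mul (hcont_or.pow 3)).add
      ((continuous_const.mul continuous_const).mul hcont_or)).div
      (hcont_w.pow 4) (fun ξ => pow_ne_zero 4 (hne ξ)))).aestronglyMeasurable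
  -- integral bounds
  have hIT := integral_inv_sq_add δ hδ
  have I1le : ‖∫ ξ : ℝ, Complex.exp (c * (ξ:ℂ)) * (-(2*(ξ:ℂ)) / ((ξ:ℂ)^2 + (b:ℂ))^2)‖
      ≤ δ⁻¹ * (π/δ) := by
    calc ‖∫ ξ : ℝ, Complex.exp (c * (ξ:ℂ)) * (-(2*(ξ:ℂ)) / ((ξ:ℂ)^2 + (b:ℂ))^2)‖
        ≤ ∫ ξ : ℝ, δ⁻¹ * (ξ^2+δ^2)⁻¹ :=
          norm_integral_le_of_norm_le (hIT'.const_mul _) (ae_of_all _ hn1)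
      _ = δ⁻¹ * (π/δ) := by rw [MeasureTheory.integral_const_mul, hIT]
  have I3le : ‖∫ ξ : ℝ, Complex.exp (c * (ξ:ℂ)) *
      ((-24*(ξ:ℂ)^3 + 24*(b:ℂ)*(ξ:ℂ)) / ((ξ:ℂ)^2 + (b:ℂ))^4)‖
      ≤ (12*δ⁻¹^3) * (π/δ) := by
    calc ‖∫ ξ : ℝ, Complex.exp (c * (ξ:ℂ)) *
        ((-24*(ξ:ℂ)^3 + 24*(b:ℂ)*(ξ:ℂ)) / ((ξ:ℂ)^2 + (b:ℂ))^4)‖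
        ≤ ∫ ξ : ℝ, (12*δ⁻¹^3) * (ξ^2+δ^2)⁻¹ :=
          norm_integral_le_of_norm_le (hIT'.const_mul _) (ae_of_all _ hn3)
      _ = (12*δ⁻¹^3) * (π/δ) := by rw [MeasureTheory.integral_const_mul, hIT]
  -- integration by parts chain
  have s1 := ibp_step hc0 hd0 hi0 hi1
  have s2 := ibp_step hc0 hd1 hi1 hi2
  have s3 := ibp_step hc0 hd2 hi2 hi3
  have hha : 0 ≤ h / |a| := by positivity
  constructor
  · rw [s1, hki]
    calc h/|a| * ‖∫ ξ : ℝ, Complex.exp (c * (ξ:ℂ)) * (-(2*(ξ:ℂ)) / ((ξ:ℂ)^2 + (b:ℂ))^2)‖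
        ≤ h/|a| * (δ⁻¹ * (π/δ)) := mul_le_mul_of_nonneg_left I1le hha
      _ = π * δ⁻¹^2 * (h/|a|) := by ring
  · rw [s1, s2, s3, hki]
    calc h/|a| * (h/|a| * (h/|a| * ‖∫ ξ : ℝ, Complex.exp (c * (ξ:ℂ)) *
          ((-24*(ξ:ℂ)^3 + 24*(b:ℂ)*(ξ:ℂ)) / ((ξ:ℂ)^2 + (b:ℂ))^4)‖))
        ≤ h/|a| * (h/|a| * (h/|a| * ((12*δ⁻¹^3) * (π/δ)))) := by
          apply mul_le_mul_of_nonneg_left _ hha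
          apply mul_le_mul_of_nonneg_left _ hha
          exact mul_le_mul_of_nonneg_left I3le hha
      _ = 12 * π * δ⁻¹^4 * (h/|a|)^3 := by ring

lemma sech_sq_lipschitz (y z : ℝ) :
    |1/(Real.cosh z)^2 - 1/(Real.cosh y)^2| ≤ 2 * |y - z| := by
  have hderiv : ∀ x : ℝ, HasDerivAt (fun t : ℝ => 1/(Real.cosh t)^2)
      (-(2*Real.cosh x^1*Real.sinh x)/((Real.cosh x)^2)^2) x := by
    intro x
    have h1 := ((Real.hasDerivAt_cosh x).pow 2).inv (pow_ne_zero 2 (Real.cosh_pos x).ne')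
    simp only [one_div]
    exact h1.congr_deriv (by simp only [Pi.pow_apply]; norm_num)
  have hbound : ∀ x : ℝ, ‖-(2*Real.cosh x^1*Real.sinh x)/((Real.cosh x)^2)^2‖ ≤ 2 := by
    intro x
    have hc1 : 1 ≤ Real.cosh x := Real.one_le_cosh x
    have hsc : |Real.sinh x| ≤ Real.cosh x := by
      nlinarith [Real.cosh_sq x, _root_.sq_abs (Real.sinh x), abs_nonneg (Real.sinh x),
        Real.cosh_pos x]
    rw [Real.norm_eq_abs, abs_div, abs_neg, div_le_iff₀ (by positivity)]
    have e1 : |2*Real.cosh x^1*Real.sinh x| = 2*Real.cosh x*|Real.sinh x| := by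
      rw [abs_mul, abs_mul]
      simp [abs_of_pos (Real.cosh_pos x)]
    have e2 : |((Real.cosh x)^2)^2| = ((Real.cosh x)^2)^2 := abs_of_pos (by positivity)
    rw [e1, e2]
    nlinarith [mul_le_mul_of_nonneg_left hsc (by positivity : (0:ℝ) ≤ 2*Real.cosh x),
      mul_nonneg (sq_nonneg (Real.cosh x)) (by nlinarith : (0:ℝ) ≤ Real.cosh x^2 - 1)]
  have key := Convex.norm_image_sub_le_of_norm_hasDerivWithin_le
      (f := fun t : ℝ => 1/(Real.cosh t)^2)
      (f' := fun x => -(2*Real.cosh x^1*Real.sinh x)/((Real.cosh x)^2)^2)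
      (s := Set.univ) (fun x _ => (hderiv x).hasDerivWithinAt)
      (fun x _ => hbound x) convex_univ (Set.mem_univ y) (Set.mem_univ z)
  rw [Real.norm_eq_abs, Real.norm_eq_abs] at key
  calc |1/(Real.cosh z)^2 - 1/(Real.cosh y)^2| ≤ 2 * |z - y| := key
    _ = 2 * |y - z| := by rw [abs_sub_comm]

lemma sech_sq_eq (y : ℝ) : 1/(Real.cosh y)^2 = 1 - (Real.tanh y)^2 := by
  have hc : (Real.cosh y)^2 ≠ 0 := by positivity
  rw [Real.tanh_eq_sinh_div_cosh, div_pow]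
  field_simp
  exact (Real.cosh_sq_sub_sinh_sq y).symm

/-- Kernel bound for the remainder operator `Q ∘ P - χ` in the
parametrix construction: the kernel
`𝒦(y,z) = (1/cosh² z - 1/cosh² y) χ(y) (2πh)⁻¹ ∫ exp(i(y-z)ξ/h) (ξ² + α² - 1/cosh² y)⁻¹ dξ`
satisfies `|𝒦(y,z)| ≤ C δ⁻⁶ min(1, h²/(y-z)²)` (stated as the conjunction of the two
bounds). -/
theorem semiclassical_remainder_kernel_bound :
    ∃ C > (0:ℝ), ∀ (δ α h : ℝ), δ ∈ Set.Ioo (0:ℝ) 1 →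
      Real.sqrt (1 - δ^2) ≤ α → α ≤ 1 → h ∈ Set.Ioo (0:ℝ) 1 →
      ∀ χ : ℝ → ℝ, ContDiff ℝ (⊤ : ℕ∞) χ → HasCompactSupport χ →
      (∀ y, 0 ≤ χ y) → (∀ y, χ y ≤ 1) →
      (Function.support χ ⊆ {y : ℝ | (3/2)*δ ≤ |Real.tanh y|}) →
      ∀ 𝒦 : ℝ → ℝ → ℂ,
      (∀ y z : ℝ, 𝒦 y z =
          ((1/(Real.cosh z)^2 - 1/(Real.cosh y)^2 : ℝ) : ℂ) * ((χ y : ℝ) : ℂ) *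
          (((2*π*h)⁻¹ : ℝ) : ℂ) *
          ∫ ξ : ℝ, Complex.exp (Complex.I * ((y - z : ℝ) : ℂ) * (ξ : ℂ) / (h : ℂ)) *
            (((ξ^2 + α^2 - 1/(Real.cosh y)^2 : ℝ) : ℂ))⁻¹) →
      ∀ y z : ℝ,
        ‖𝒦 y z‖ ≤ C * δ⁻¹^6 ∧
        (y ≠ z → ‖𝒦 y z‖ ≤ C * δ⁻¹^6 * (h^2 / (y - z)^2)) := by
  refine ⟨12, by norm_num, ?_⟩
  rintro δ α h ⟨hδ0, hδ1⟩ hα1 hα2 ⟨hh0, hh1⟩ χ hχsm hχc hχ0 hχ1 hsupp 𝒦 h𝒦 y z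
  have hδinv : 1 ≤ δ⁻¹ := (one_le_inv₀ hδ0).mpr hδ1.le
  have hδ6 : (0:ℝ) < δ⁻¹^6 := by positivity
  -- trivial case: χ y = 0
  by_cases hχy : χ y = 0
  · rw [h𝒦 y z, hχy]
    simp only [Complex.ofReal_zero, mul_zero, zero_mul, norm_zero]
    constructor
    · positivity
    · intro _; positivity
  -- trivial case: y = z
  by_cases hyz : y = z
  · subst hyz
    rw [h𝒦 y y, sub_self]
    simp only [Complex.ofReal_zero, zero_mul, norm_zero]
    refine ⟨by positivity, fun hne => absurd rfl hne⟩
  -- main case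
  have ha : y - z ≠ 0 := sub_ne_zero.mpr hyz
  have ht : (3/2)*δ ≤ |Real.tanh y| := hsupp hχy
  set b : ℝ := α^2 - 1/(Real.cosh y)^2 with hbdef
  have hb : δ^2 ≤ b := by
    have h1 : 1 - δ^2 ≤ α^2 := by
      have := Real.sq_sqrt (show (0:ℝ) ≤ 1 - δ^2 by nlinarith)
      calc 1 - δ^2 = (Real.sqrt (1 - δ^2))^2 := this.symm
        _ ≤ α^2 := pow_le_pow_left₀ (Real.sqrt_nonneg _) hα1 2
    have h2 := sech_sq_eq y
    have h3 : ((3/2)*δ)^2 ≤ (Real.tanh y)^2 := by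
      calc ((3/2)*δ)^2 ≤ |Real.tanh y|^2 := pow_le_pow_left₀ (by positivity) ht 2
        _ = (Real.tanh y)^2 := sq_abs _
    rw [hbdef, h2]
    nlinarith
  obtain ⟨B1, B2⟩ := osc_key b δ h (y - z) hδ0 hδ1.le hb hh0 ha
  have hfe : ∀ ξ : ℝ, ((ξ^2 + α^2 - 1/(Real.cosh y)^2 : ℝ) : ℂ) = ((ξ^2 + b : ℝ) : ℂ) :=
    fun ξ => congrArg Complex.ofReal (by rw [hbdef]; ring)
  rw [h𝒦 y z]
  simp_rw [hfe]
  rw [norm_mul, norm_mul, norm_mul, Complex.norm_real, Complex.norm_real, Complex.norm_real,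
    Real.norm_eq_abs, Real.norm_eq_abs, Real.norm_eq_abs]
  have hD : |1/(Real.cosh z)^2 - 1/(Real.cosh y)^2| ≤ 2 * |y - z| := sech_sq_lipschitz y z
  have hX : |χ y| ≤ 1 := by rw [abs_le]; exact ⟨by linarith [hχ0 y], hχ1 y⟩
  have hP : |(2*π*h)⁻¹| = (2*π*h)⁻¹ := abs_of_pos (by positivity)
  have haabs : (0:ℝ) < |y - z| := abs_pos.mpr ha
  rw [hP]
  set N : ℝ := ‖∫ ξ : ℝ, Complex.exp (Complex.I * ((y - z : ℝ):ℂ) * (ξ:ℂ) / (h:ℂ)) *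
      (((ξ^2 + b : ℝ) : ℂ))⁻¹‖ with hNdef
  have hN0 : 0 ≤ N := norm_nonneg _
  constructor
  · calc |1/(Real.cosh z)^2 - 1/(Real.cosh y)^2| * |χ y| * (2*π*h)⁻¹ * N
        ≤ (2*|y - z|) * 1 * (2*π*h)⁻¹ * (π * δ⁻¹^2 * (h/|y - z|)) := by
          gcongr
      _ = δ⁻¹^2 := by field_simp
      _ ≤ 12 * δ⁻¹^6 := by
          have : δ⁻¹^2 ≤ δ⁻¹^6 := pow_le_pow_right₀ hδinv (by norm_num)
          linarith
  · intro _
    calc |1/(Real.cosh z)^2 - 1/(Real.cosh y)^2| * |χ y| * (2*π*h)⁻¹ * N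
        ≤ (2*|y - z|) * 1 * (2*π*h)⁻¹ * (12 * π * δ⁻¹^4 * (h/|y - z|)^3) := by
          gcongr
      _ = 12 * δ⁻¹^4 * (h^2 / (y - z)^2) := by
          have hsq : |y - z|^2 = (y - z)^2 := _root_.sq_abs (y - z)
          field_simp
          linear_combination (-1:ℝ) * hsq
      _ ≤ 12 * δ⁻¹^6 * (h^2 / (y - z)^2) := by
          have h1 : δ⁻¹^4 ≤ δ⁻¹^6 := pow_le_pow_right₀ hδinv (by norm_num)
          have h2 : (0:ℝ) ≤ h^2 / (y - z)^2 := by positivity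
          nlinarith
end
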